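/- arXiv:1905.10176 — 5 statements merged into one kernel-verified Lean document; each statement's English description precedes it below -/
import Mathlib

section
/- Under the instrumental-variable moment condition, the reformulated conditional moment restriction holds: E[Y − q0(X) − θ0(X)·(h0(Z,X) − p0(X)) | Z, X] = 0 almost surely. -/
/-! Since `θ₀(X)` and `f₀(X)` are `σ(X)`-measurable and `σ(X) ⊆ σ(Z, X)`, the moment condition
gives `E[Y | Z, X] = θ₀ h₀ + f₀` and, by the tower property, `q₀ = E[Y | X] = θ₀ p₀ + f₀`.
Subtracting eliminates `f₀`: `E[Y | Z, X] - q₀ - θ₀ (h₀ - p₀) = 0`, and the left side is the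
conditional expectation given `(Z, X)` of `Y - q₀ - θ₀ (h₀ - p₀)`. -/

open MeasureTheory Filter

section PartiallyLinear

variable {Ω : Type*} {m' m mΩ : MeasurableSpace Ω} {μ : Measure Ω} [IsFiniteMeasure μ]
  {Y T θ f : Ω → ℝ} {C : ℝ}

theorem condExp_sub_mul_sub_ae_eq (hm : m ≤ mΩ) (hθ : StronglyMeasurable[m] θ)
    (hθC : ∀ ω, |θ ω| ≤ C) (hf : StronglyMeasurable[m] f) (hY : Integrable Y μ)
    (hT : Integrable T μ) (hfi : Integrable f μ) :
    μ[Y - θ * T - f | m] =ᵐ[μ] μ[Y | m] - θ * μ[T | m] - f := by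
  have hθT : Integrable (θ * T) μ :=
    hT.bdd_mul (hθ.mono hm).aestronglyMeasurable (.of_forall hθC)
  calc μ[Y - θ * T - f | m]
      =ᵐ[μ] μ[Y | m] - μ[θ * T | m] - μ[f | m] :=
        (condExp_sub (hY.sub hθT) hfi m).trans ((condExp_sub hY hθT m).sub .rfl)
    _ =ᵐ[μ] μ[Y | m] - θ * μ[T | m] - f := by
        rw [condExp_of_stronglyMeasurable hm hf hfi]
        exact (EventuallyEq.rfl.sub (condExp_mul_of_stronglyMeasurable_left hθ hθT hT)).sub .rfl

theorem condExp_ae_eq_mul_condExp_add_of_condExp_sub_mul_sub (hm' : m' ≤ m) (hm : m ≤ mΩ)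
    (hθ : StronglyMeasurable[m'] θ) (hθC : ∀ ω, |θ ω| ≤ C) (hf : StronglyMeasurable[m'] f)
    (hY : Integrable Y μ) (hT : Integrable T μ) (hfi : Integrable f μ)
    (h : μ[Y - θ * T - f | m] =ᵐ[μ] 0) :
    μ[Y | m'] =ᵐ[μ] θ * μ[T | m'] + f := by
  have h' : μ[Y - θ * T - f | m'] =ᵐ[μ] 0 :=
    calc μ[Y - θ * T - f | m'] =ᵐ[μ] μ[μ[Y - θ * T - f | m] | m'] :=
          (condExp_condExp_of_le hm' hm).symm
      _ =ᵐ[μ] μ[0 | m'] := condExp_congr_ae h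
      _ = 0 := condExp_zero
  filter_upwards [(condExp_sub_mul_sub_ae_eq (hm'.trans hm) hθ hθC hf hY hT hfi).symm.trans h']
    with ω hω
  simp only [Pi.sub_apply, Pi.mul_apply, Pi.add_apply, Pi.zero_apply] at hω ⊢
  linarith

theorem condExp_sub_condExp_sub_mul_ae_eq_zero (hm' : m' ≤ m) (hm : m ≤ mΩ)
    (hθ : StronglyMeasurable[m'] θ) (hθC : ∀ ω, |θ ω| ≤ C) (hf : StronglyMeasurable[m'] f)
    (hY : Integrable Y μ) (hT : Integrable T μ) (hfi : Integrable f μ)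
    (h : μ[Y - θ * T - f | m] =ᵐ[μ] 0) :
    μ[Y - μ[Y | m'] - θ * (μ[T | m] - μ[T | m']) | m] =ᵐ[μ] 0 := by
  have hYm := condExp_ae_eq_mul_condExp_add_of_condExp_sub_mul_sub le_rfl hm
    (hθ.mono hm') hθC (hf.mono hm') hY hT hfi h
  have hYm' := condExp_ae_eq_mul_condExp_add_of_condExp_sub_mul_sub hm' hm hθ hθC hf hY hT hfi h
  have hG : StronglyMeasurable[m] (θ * (μ[T | m] - μ[T | m'])) :=
    (hθ.mono hm').mul (stronglyMeasurable_condExp.sub (stronglyMeasurable_condExp.mono hm'))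
  have hGi : Integrable (θ * (μ[T | m] - μ[T | m'])) μ :=
    (integrable_condExp.sub integrable_condExp).bdd_mul
      (hθ.mono (hm'.trans hm)).aestronglyMeasurable (.of_forall hθC)
  have hexpand : μ[Y - μ[Y | m'] - θ * (μ[T | m] - μ[T | m']) | m] =ᵐ[μ]
      μ[Y | m] - μ[Y | m'] - θ * (μ[T | m] - μ[T | m']) := by
    refine (condExp_sub (hY.sub integrable_condExp) hGi m).trans ?_
    rw [condExp_of_stronglyMeasurable hm hG hGi]
    refine (condExp_sub hY integrable_condExp m).sub .rfl |>.trans ?_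
    rw [condExp_of_stronglyMeasurable hm (stronglyMeasurable_condExp.mono hm') integrable_condExp]
  filter_upwards [hexpand, hYm, hYm'] with ω hω hYω hYω'
  simp only [Pi.sub_apply, Pi.mul_apply, Pi.add_apply, Pi.zero_apply] at hω hYω hYω' ⊢
  rw [hω, hYω, hYω']
  ring

end PartiallyLinear

theorem stmt_1_general
    {Ω 𝓧 : Type*} [MeasurableSpace Ω] [MeasurableSpace 𝓧]
    (μ : Measure Ω) [IsProbabilityMeasure μ]
    (Y T Z : Ω → ℝ) (X : Ω → 𝓧)
    (hY : Measurable Y) (hT : Measurable T) (hZ : Measurable Z) (hX : Measurable X)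
    (hYbdd : ∃ C, ∀ ω, |Y ω| ≤ C) (hTbdd : ∃ C, ∀ ω, |T ω| ≤ C)
    (θ0 f0 : 𝓧 → ℝ) (hθ0m : Measurable θ0) (hf0m : Measurable f0)
    (hθ0bdd : ∃ C, ∀ x, |θ0 x| ≤ C) (hf0bdd : ∃ C, ∀ x, |f0 x| ≤ C)
    (hIV : μ[fun ω => Y ω - θ0 (X ω) * T ω - f0 (X ω) |
        MeasurableSpace.comap (fun ω => (Z ω, X ω)) inferInstance] =ᵐ[μ] 0)
    (q0 p0 : 𝓧 → ℝ)
    (hq0 : (fun ω => q0 (X ω)) =ᵐ[μ] μ[Y | MeasurableSpace.comap X inferInstance])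
    (hp0 : (fun ω => p0 (X ω)) =ᵐ[μ] μ[T | MeasurableSpace.comap X inferInstance])
    (h0 : ℝ × 𝓧 → ℝ)
    (hh0 : (fun ω => h0 (Z ω, X ω)) =ᵐ[μ]
        μ[T | MeasurableSpace.comap (fun ω => (Z ω, X ω)) inferInstance]) :
    μ[fun ω => Y ω - q0 (X ω) - θ0 (X ω) * (h0 (Z ω, X ω) - p0 (X ω)) |
        MeasurableSpace.comap (fun ω => (Z ω, X ω)) inferInstance] =ᵐ[μ] 0 := by
  have hm := (hZ.prodMk hX).comap_le
  set m := MeasurableSpace.comap (fun ω => (Z ω, X ω)) inferInstance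
  set mX := MeasurableSpace.comap X inferInstance
  have hmX : mX ≤ m := (measurable_snd.comp (comap_measurable _ : Measurable[m] _)).comap_le
  have hXmX : Measurable[mX] X := comap_measurable X
  obtain ⟨CY, hCY⟩ := hYbdd
  obtain ⟨CT, hCT⟩ := hTbdd
  obtain ⟨Cθ, hCθ⟩ := hθ0bdd
  obtain ⟨Cf, hCf⟩ := hf0bdd
  calc _ =ᵐ[μ] μ[Y - μ[Y | mX] - θ0 ∘ X * (μ[T | m] - μ[T | mX]) | m] := by
        refine condExp_congr_ae ?_
        filter_upwards [hq0, hp0, hh0] with ω hq hp hh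
        simp only [Pi.sub_apply, Pi.mul_apply, Function.comp_apply, hq, hp, hh]
    _ =ᵐ[μ] 0 := condExp_sub_condExp_sub_mul_ae_eq_zero hmX hm
        (hθ0m.comp hXmX).stronglyMeasurable (fun ω => hCθ (X ω))
        (hf0m.comp hXmX).stronglyMeasurable
        (.of_bound hY.aestronglyMeasurable CY (.of_forall hCY))
        (.of_bound hT.aestronglyMeasurable CT (.of_forall hCT))
        (.of_bound (hf0m.comp hX).aestronglyMeasurable Cf (.of_forall fun ω => hCf (X ω))) hIV

theorem stmt_1
    {Ω 𝓧 : Type*} [MeasurableSpace Ω] [MeasurableSpace 𝓧] [StandardBorelSpace 𝓧]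
    (μ : Measure Ω) [IsProbabilityMeasure μ]
    (Y T Z : Ω → ℝ) (X : Ω → 𝓧)
    (hY : Measurable Y) (hT : Measurable T) (hZ : Measurable Z) (hX : Measurable X)
    (hYbdd : ∃ C, ∀ ω, |Y ω| ≤ C) (hTbdd : ∃ C, ∀ ω, |T ω| ≤ C)
    (hZbdd : ∃ C, ∀ ω, |Z ω| ≤ C)
    (θ0 f0 : 𝓧 → ℝ) (hθ0m : Measurable θ0) (hf0m : Measurable f0)
    (hθ0bdd : ∃ C, ∀ x, |θ0 x| ≤ C) (hf0bdd : ∃ C, ∀ x, |f0 x| ≤ C)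
    (hIV : μ[fun ω => Y ω - θ0 (X ω) * T ω - f0 (X ω) |
        MeasurableSpace.comap (fun ω => (Z ω, X ω)) inferInstance] =ᵐ[μ] 0)
    (q0 p0 r0 : 𝓧 → ℝ) (hq0m : Measurable q0) (hp0m : Measurable p0) (hr0m : Measurable r0)
    (hq0bdd : ∃ C, ∀ x, |q0 x| ≤ C) (hp0bdd : ∃ C, ∀ x, |p0 x| ≤ C)
    (hr0bdd : ∃ C, ∀ x, |r0 x| ≤ C)
    (hq0 : (fun ω => q0 (X ω)) =ᵐ[μ] μ[Y | MeasurableSpace.comap X inferInstance])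
    (hp0 : (fun ω => p0 (X ω)) =ᵐ[μ] μ[T | MeasurableSpace.comap X inferInstance])
    (hr0 : (fun ω => r0 (X ω)) =ᵐ[μ] μ[Z | MeasurableSpace.comap X inferInstance])
    (h0 : ℝ × 𝓧 → ℝ) (hh0m : Measurable h0) (hh0bdd : ∃ C, ∀ zx, |h0 zx| ≤ C)
    (hh0 : (fun ω => h0 (Z ω, X ω)) =ᵐ[μ]
        μ[T | MeasurableSpace.comap (fun ω => (Z ω, X ω)) inferInstance])
    (β0 : 𝓧 → ℝ) (hβ0m : Measurable β0) (hβ0bdd : ∃ C, ∀ x, |β0 x| ≤ C)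
    (hβ0 : (fun ω => β0 (X ω)) =ᵐ[μ]
        μ[fun ω => (T ω - p0 (X ω)) * (Z ω - r0 (X ω)) | MeasurableSpace.comap X inferInstance])
    (V0 : 𝓧 → ℝ) (hV0m : Measurable V0) (hV0bdd : ∃ C, ∀ x, |V0 x| ≤ C)
    (hV0 : (fun ω => V0 (X ω)) =ᵐ[μ]
        μ[fun ω => (h0 (Z ω, X ω) - p0 (X ω)) ^ 2 | MeasurableSpace.comap X inferInstance]) :
    μ[fun ω => Y ω - q0 (X ω) - θ0 (X ω) * (h0 (Z ω, X ω) - p0 (X ω)) |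
        MeasurableSpace.comap (fun ω => (Z ω, X ω)) inferInstance] =ᵐ[μ] 0 :=
  stmt_1_general μ Y T Z X hY hT hZ hX hYbdd hTbdd θ0 f0 hθ0m hf0m hθ0bdd hf0bdd hIV q0 p0 hq0 hp0
    h0 hh0
end

section
/- For every bounded measurable function θ of X, the oracle DMLIV loss decomposes as L¹(θ; q0, h0, p0) = L¹(θ0; q0, h0, p0) + E[V0(X)·(θ(X) − θ0(X))²]. In particular θ0 minimizes θ ↦ L¹(θ; q0, h0, p0) over all bounded measurable functions of X. -/
/-!
Write `W = h₀(Z, X) - p₀(X)`, `D = θ(X) - θ₀(X)` and `R = Y - q₀(X) - θ₀(X) W`, so that the loss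
at `θ` is `E[(R - D W)²]`. The cross term `E[R · D W]` vanishes: in
`R = ε + θ₀(X) (T - h₀(Z, X)) + (f₀ - q₀ + θ₀ p₀)(X)`, where `ε = Y - θ₀(X) T - f₀(X)` has
`E[ε | Z, X] = 0` by the IV condition, the first two summands have zero conditional mean given
`(Z, X)` while `D W` is `(Z, X)`-measurable, and the last one is `X`-measurable while
`E[W | X] = 0` by the tower property. The tower property also turns
`E[D² W²]` into `E[V₀(X) D²]`, which is nonnegative.
-/

open MeasureTheory
open scoped ENNReal

section ConditionalExpectation

variable {Ω : Type*} {m m₀ : MeasurableSpace Ω} {μ : Measure[m₀] Ω} {f g : Ω → ℝ}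

theorem integral_mul_eq_zero_of_condExp_ae_eq_zero (hm : m ≤ m₀) [SigmaFinite (μ.trim hm)]
    (hg : StronglyMeasurable[m] g) (hf : Integrable f μ) (hfg : Integrable (f * g) μ)
    (hf₀ : μ[f | m] =ᵐ[μ] 0) : ∫ ω, f ω * g ω ∂μ = 0 := by
  have hfg₀ : μ[f * g | m] =ᵐ[μ] 0 := by
    filter_upwards [condExp_mul_of_stronglyMeasurable_right hg hfg hf, hf₀] with ω h h₀
    simp [h, h₀]
  calc ∫ ω, f ω * g ω ∂μ = ∫ ω, μ[f * g | m] ω ∂μ := (integral_condExp hm).symm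
    _ = 0 := by simp [integral_congr_ae hfg₀]

theorem condExp_sub_ae_eq_zero_of_ae_eq_condExp (hm : m ≤ m₀) [SigmaFinite (μ.trim hm)]
    (hf : Integrable f μ) (hg : g =ᵐ[μ] μ[f | m]) : μ[f - g | m] =ᵐ[μ] 0 := by
  have hgg : μ[g | m] =ᵐ[μ] μ[f | m] :=
    (condExp_congr_ae hg).trans (condExp_condExp_of_le le_rfl hm)
  filter_upwards [condExp_sub hf (integrable_condExp.congr hg.symm) m, hgg] with ω h h'
  simp [h, h']

theorem integral_mul_sq_nonneg_of_ae_eq_condExp_sq {V W D : Ω → ℝ}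
    (hV : V =ᵐ[μ] μ[fun ω => W ω ^ 2 | m]) : 0 ≤ ∫ ω, V ω * D ω ^ 2 ∂μ := by
  refine integral_nonneg_of_ae ?_
  filter_upwards [hV, condExp_nonneg (m := m) (ae_of_all μ fun ω => sq_nonneg (W ω))]
    with ω hVω hnn
  exact mul_nonneg (hVω ▸ hnn) (sq_nonneg _)

end ConditionalExpectation

section Bounded

variable {α : Type*} [MeasurableSpace α] {μ : Measure α} {f g : α → ℝ}

theorem MeasureTheory.MemLp.mul_top (hf : MemLp f ∞ μ) (hg : MemLp g ∞ μ) : MemLp (f * g) ∞ μ :=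
  hg.mul hf

theorem MeasureTheory.MemLp.integrable_mul_top [IsFiniteMeasure μ] (hf : MemLp f ∞ μ)
    (hg : MemLp g ∞ μ) : Integrable (f * g) μ :=
  (hf.mul_top hg).integrable le_top

theorem MeasureTheory.MemLp.sq_top (hf : MemLp f ∞ μ) : MemLp (fun x => f x ^ 2) ∞ μ := by
  simp only [sq]
  exact hf.mul_top hf

theorem memLp_top_of_abs_le (hf : Measurable f) (hb : ∃ C, ∀ x, |f x| ≤ C) : MemLp f ∞ μ :=
  let ⟨C, hC⟩ := hb
  memLp_top_of_bound hf.aestronglyMeasurable C (ae_of_all _ hC)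

theorem memLp_top_comp_of_abs_le {β : Type*} [MeasurableSpace β] {g : β → ℝ} {X : α → β}
    (hg : Measurable g) (hb : ∃ C, ∀ x, |g x| ≤ C) (hX : Measurable X) :
    MemLp (fun ω => g (X ω)) ∞ μ :=
  memLp_top_of_abs_le (hg.comp hX) (hb.imp fun _ hC ω => hC (X ω))

theorem integral_sq_sub_mul_eq [IsFiniteMeasure μ] {R D W V : α → ℝ} (hR : MemLp R ∞ μ)
    (hD : MemLp D ∞ μ) (hW : MemLp W ∞ μ) (hV : MemLp V ∞ μ)
    (hcross : ∫ x, R x * (D x * W x) ∂μ = 0) (hsq : ∫ x, (W x ^ 2 - V x) * D x ^ 2 ∂μ = 0) :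
    ∫ x, (R x - D x * W x) ^ 2 ∂μ = ∫ x, R x ^ 2 ∂μ + ∫ x, V x * D x ^ 2 ∂μ := by
  have hR2 : Integrable (fun x => R x ^ 2) μ := (hR.mono_exponent le_top).integrable_sq
  have hRDW : Integrable (fun x => R x * (D x * W x)) μ := hR.integrable_mul_top (hD.mul_top hW)
  have hWVD : Integrable (fun x => (W x ^ 2 - V x) * D x ^ 2) μ :=
    (hW.sq_top.sub hV).integrable_mul_top hD.sq_top
  have hVD : Integrable (fun x => V x * D x ^ 2) μ := hV.integrable_mul_top hD.sq_top
  calc ∫ x, (R x - D x * W x) ^ 2 ∂μ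
      = ∫ x, (R x ^ 2 - 2 * (R x * (D x * W x)) + (W x ^ 2 - V x) * D x ^ 2 + V x * D x ^ 2) ∂μ :=
        integral_congr_ae (ae_of_all _ fun x => by ring)
    _ = ∫ x, R x ^ 2 ∂μ + ∫ x, V x * D x ^ 2 ∂μ := by
        rw [integral_add ((hR2.sub' (hRDW.const_mul 2)).fun_add hWVD) hVD,
          integral_add (hR2.sub' (hRDW.const_mul 2)) hWVD, integral_sub hR2 (hRDW.const_mul 2),
          integral_const_mul, hcross, hsq]
        ring

end Bounded

section Oracle

variable {Ω : Type*} {m₁ m₂ m₀ : MeasurableSpace Ω} {μ : Measure[m₀] Ω}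
  {Y T H P Q F Θ₀ Θ D V : Ω → ℝ}

theorem integral_residual_mul_eq_zero [IsFiniteMeasure μ] (hm₂₁ : m₂ ≤ m₁) (hm₁ : m₁ ≤ m₀)
    (hY : MemLp Y ∞ μ) (hT : MemLp T ∞ μ) (hH : MemLp H ∞ μ) (hP : MemLp P ∞ μ)
    (hQ : MemLp Q ∞ μ) (hF : MemLp F ∞ μ) (hΘ₀ : MemLp Θ₀ ∞ μ) (hD : MemLp D ∞ μ)
    (hHm : StronglyMeasurable[m₁] H) (hPm : StronglyMeasurable[m₂] P)
    (hQm : StronglyMeasurable[m₂] Q) (hFm : StronglyMeasurable[m₂] F)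
    (hΘ₀m : StronglyMeasurable[m₂] Θ₀) (hDm : StronglyMeasurable[m₂] D)
    (hIV : μ[fun ω => Y ω - Θ₀ ω * T ω - F ω | m₁] =ᵐ[μ] 0)
    (hTH : μ[T - H | m₁] =ᵐ[μ] 0) (hHP : μ[H - P | m₂] =ᵐ[μ] 0) :
    ∫ ω, (Y ω - Q ω - Θ₀ ω * (H ω - P ω)) * (D ω * (H ω - P ω)) ∂μ = 0 := by
  have hW := hH.sub hP
  have hε := (hY.sub (hΘ₀.mul_top hT)).sub hF
  have hG := (hF.sub hQ).add (hΘ₀.mul_top hP)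
  have hWm : StronglyMeasurable[m₁] (H - P) := hHm.sub (hPm.mono hm₂₁)
  have i₁ : Integrable (fun ω => (Y ω - Θ₀ ω * T ω - F ω) * (D ω * (H ω - P ω))) μ :=
    hε.integrable_mul_top (hD.mul_top hW)
  have i₂ : Integrable (fun ω => (T ω - H ω) * (Θ₀ ω * (D ω * (H ω - P ω)))) μ :=
    (hT.sub hH).integrable_mul_top (hΘ₀.mul_top (hD.mul_top hW))
  have i₃ : Integrable (fun ω => (H ω - P ω) * ((F ω - Q ω + Θ₀ ω * P ω) * D ω)) μ :=
    hW.integrable_mul_top (hG.mul_top hD)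
  have h₁ : ∫ ω, (Y ω - Θ₀ ω * T ω - F ω) * (D ω * (H ω - P ω)) ∂μ = 0 :=
    integral_mul_eq_zero_of_condExp_ae_eq_zero hm₁ ((hDm.mono hm₂₁).mul hWm)
      (hε.integrable le_top) i₁ hIV
  have h₂ : ∫ ω, (T ω - H ω) * (Θ₀ ω * (D ω * (H ω - P ω))) ∂μ = 0 :=
    integral_mul_eq_zero_of_condExp_ae_eq_zero hm₁
      ((hΘ₀m.mono hm₂₁).mul ((hDm.mono hm₂₁).mul hWm)) ((hT.sub hH).integrable le_top) i₂ hTH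
  have h₃ : ∫ ω, (H ω - P ω) * ((F ω - Q ω + Θ₀ ω * P ω) * D ω) ∂μ = 0 :=
    integral_mul_eq_zero_of_condExp_ae_eq_zero (hm₂₁.trans hm₁)
      (((hFm.sub hQm).add (hΘ₀m.mul hPm)).mul hDm) (hW.integrable le_top) i₃ hHP
  calc ∫ ω, (Y ω - Q ω - Θ₀ ω * (H ω - P ω)) * (D ω * (H ω - P ω)) ∂μ
      = ∫ ω, ((Y ω - Θ₀ ω * T ω - F ω) * (D ω * (H ω - P ω))
          + (T ω - H ω) * (Θ₀ ω * (D ω * (H ω - P ω)))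
          + (H ω - P ω) * ((F ω - Q ω + Θ₀ ω * P ω) * D ω)) ∂μ :=
        integral_congr_ae (ae_of_all _ fun ω => by ring)
    _ = 0 := by rw [integral_add (i₁.fun_add i₂) i₃, integral_add i₁ i₂, h₁, h₂, h₃]; norm_num

/-- With `Q = q(X)`, `Θ = θ(X)`, `H = h(Z, X)` and `P = p(X)` this is the DMLIV loss
`L¹(θ; q, h, p)`. -/
noncomputable def dmlivLoss (μ : Measure[m₀] Ω) (Y Q Θ H P : Ω → ℝ) : ℝ :=
  ∫ ω, (Y ω - Q ω - Θ ω * (H ω - P ω)) ^ 2 ∂μ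

theorem dmlivLoss_eq_add_integral [IsFiniteMeasure μ] (hm₂₁ : m₂ ≤ m₁) (hm₁ : m₁ ≤ m₀)
    (hY : MemLp Y ∞ μ) (hT : MemLp T ∞ μ) (hH : MemLp H ∞ μ) (hP : MemLp P ∞ μ)
    (hQ : MemLp Q ∞ μ) (hF : MemLp F ∞ μ) (hΘ₀ : MemLp Θ₀ ∞ μ) (hΘ : MemLp Θ ∞ μ)
    (hV : MemLp V ∞ μ)
    (hHm : StronglyMeasurable[m₁] H) (hPm : StronglyMeasurable[m₂] P)
    (hQm : StronglyMeasurable[m₂] Q) (hFm : StronglyMeasurable[m₂] F)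
    (hΘ₀m : StronglyMeasurable[m₂] Θ₀) (hΘm : StronglyMeasurable[m₂] Θ)
    (hIV : μ[fun ω => Y ω - Θ₀ ω * T ω - F ω | m₁] =ᵐ[μ] 0)
    (hHT : H =ᵐ[μ] μ[T | m₁]) (hPT : P =ᵐ[μ] μ[T | m₂])
    (hVW : V =ᵐ[μ] μ[fun ω => (H ω - P ω) ^ 2 | m₂]) :
    dmlivLoss μ Y Q Θ H P = dmlivLoss μ Y Q Θ₀ H P + ∫ ω, V ω * (Θ ω - Θ₀ ω) ^ 2 ∂μ := by
  have hm₂ := hm₂₁.trans hm₁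
  have hPH : P =ᵐ[μ] μ[H | m₂] :=
    hPT.trans ((condExp_condExp_of_le hm₂₁ hm₁).symm.trans (condExp_congr_ae hHT.symm))
  have hTH := condExp_sub_ae_eq_zero_of_ae_eq_condExp hm₁ (hT.integrable le_top) hHT
  have hHP := condExp_sub_ae_eq_zero_of_ae_eq_condExp hm₂ (hH.integrable le_top) hPH
  have hW2V := condExp_sub_ae_eq_zero_of_ae_eq_condExp hm₂
    ((hH.sub hP).sq_top.integrable le_top) hVW
  have hD := hΘ.sub hΘ₀
  have hDm := hΘm.sub hΘ₀m
  have hcross := integral_residual_mul_eq_zero hm₂₁ hm₁ hY hT hH hP hQ hF hΘ₀ hD hHm hPm hQm hFm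
    hΘ₀m hDm hIV hTH hHP
  have hsq : ∫ ω, ((H ω - P ω) ^ 2 - V ω) * (Θ ω - Θ₀ ω) ^ 2 ∂μ = 0 :=
    integral_mul_eq_zero_of_condExp_ae_eq_zero hm₂ (hDm.pow 2)
      (((hH.sub hP).sq_top.sub hV).integrable le_top)
      (((hH.sub hP).sq_top.sub hV).integrable_mul_top hD.sq_top) hW2V
  calc dmlivLoss μ Y Q Θ H P
      = ∫ ω, (Y ω - Q ω - Θ₀ ω * (H ω - P ω) - (Θ ω - Θ₀ ω) * (H ω - P ω)) ^ 2 ∂μ :=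
        integral_congr_ae (ae_of_all _ fun ω => by ring)
    _ = _ := integral_sq_sub_mul_eq ((hY.sub hQ).sub (hΘ₀.mul_top (hH.sub hP))) hD (hH.sub hP) hV
        hcross hsq

end Oracle

theorem stmt_2_general
    {Ω 𝓧 : Type*} [MeasurableSpace Ω] [MeasurableSpace 𝓧]
    (μ : Measure Ω) [IsProbabilityMeasure μ]
    (Y T Z : Ω → ℝ) (X : Ω → 𝓧)
    (hY : Measurable Y) (hT : Measurable T) (hZ : Measurable Z) (hX : Measurable X)
    (hYbdd : ∃ C, ∀ ω, |Y ω| ≤ C) (hTbdd : ∃ C, ∀ ω, |T ω| ≤ C)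
    (θ0 f0 : 𝓧 → ℝ) (hθ0m : Measurable θ0) (hf0m : Measurable f0)
    (hθ0bdd : ∃ C, ∀ x, |θ0 x| ≤ C) (hf0bdd : ∃ C, ∀ x, |f0 x| ≤ C)
    (hIV : μ[fun ω => Y ω - θ0 (X ω) * T ω - f0 (X ω) |
        MeasurableSpace.comap (fun ω => (Z ω, X ω)) inferInstance] =ᵐ[μ] 0)
    (q0 p0 : 𝓧 → ℝ) (hq0m : Measurable q0) (hp0m : Measurable p0)
    (hq0bdd : ∃ C, ∀ x, |q0 x| ≤ C) (hp0bdd : ∃ C, ∀ x, |p0 x| ≤ C)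
    (hp0 : (fun ω => p0 (X ω)) =ᵐ[μ] μ[T | MeasurableSpace.comap X inferInstance])
    (h0 : ℝ × 𝓧 → ℝ) (hh0m : Measurable h0) (hh0bdd : ∃ C, ∀ zx, |h0 zx| ≤ C)
    (hh0 : (fun ω => h0 (Z ω, X ω)) =ᵐ[μ]
        μ[T | MeasurableSpace.comap (fun ω => (Z ω, X ω)) inferInstance])
    (V0 : 𝓧 → ℝ) (hV0m : Measurable V0) (hV0bdd : ∃ C, ∀ x, |V0 x| ≤ C)
    (hV0 : (fun ω => V0 (X ω)) =ᵐ[μ]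
        μ[fun ω => (h0 (Z ω, X ω) - p0 (X ω)) ^ 2 | MeasurableSpace.comap X inferInstance]) :
    ∀ θ : 𝓧 → ℝ, Measurable θ → (∃ C, ∀ x, |θ x| ≤ C) →
      ((∫ ω, (Y ω - q0 (X ω) - θ (X ω) * (h0 (Z ω, X ω) - p0 (X ω))) ^ 2 ∂μ)
          = (∫ ω, (Y ω - q0 (X ω) - θ0 (X ω) * (h0 (Z ω, X ω) - p0 (X ω))) ^ 2 ∂μ)
            + ∫ ω, V0 (X ω) * (θ (X ω) - θ0 (X ω)) ^ 2 ∂μ)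
      ∧ (∫ ω, (Y ω - q0 (X ω) - θ0 (X ω) * (h0 (Z ω, X ω) - p0 (X ω))) ^ 2 ∂μ)
          ≤ ∫ ω, (Y ω - q0 (X ω) - θ (X ω) * (h0 (Z ω, X ω) - p0 (X ω))) ^ 2 ∂μ := by
  intro θ hθm hθbdd
  have hXm : Measurable[MeasurableSpace.comap X inferInstance] X :=
    comap_measurable X
  have hZXm : Measurable[MeasurableSpace.comap (fun ω => (Z ω, X ω)) inferInstance]
      (fun ω => (Z ω, X ω)) :=
    comap_measurable _
  have hloss := dmlivLoss_eq_add_integral (measurable_snd.comp hZXm).comap_le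
    (hZ.prodMk hX).comap_le (memLp_top_of_abs_le hY hYbdd) (memLp_top_of_abs_le hT hTbdd)
    (memLp_top_comp_of_abs_le hh0m hh0bdd (hZ.prodMk hX)) (memLp_top_comp_of_abs_le hp0m hp0bdd hX)
    (memLp_top_comp_of_abs_le hq0m hq0bdd hX) (memLp_top_comp_of_abs_le hf0m hf0bdd hX)
    (memLp_top_comp_of_abs_le hθ0m hθ0bdd hX) (memLp_top_comp_of_abs_le hθm hθbdd hX)
    (memLp_top_comp_of_abs_le hV0m hV0bdd hX) (hh0m.comp hZXm).stronglyMeasurable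
    (hp0m.comp hXm).stronglyMeasurable (hq0m.comp hXm).stronglyMeasurable
    (hf0m.comp hXm).stronglyMeasurable (hθ0m.comp hXm).stronglyMeasurable
    (hθm.comp hXm).stronglyMeasurable hIV hh0 hp0 hV0
  exact ⟨hloss, (le_add_of_nonneg_right
    (integral_mul_sq_nonneg_of_ae_eq_condExp_sq hV0)).trans_eq hloss.symm⟩

theorem stmt_2
    {Ω 𝓧 : Type*} [MeasurableSpace Ω] [MeasurableSpace 𝓧] [StandardBorelSpace 𝓧]
    (μ : Measure Ω) [IsProbabilityMeasure μ]
    (Y T Z : Ω → ℝ) (X : Ω → 𝓧)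
    (hY : Measurable Y) (hT : Measurable T) (hZ : Measurable Z) (hX : Measurable X)
    (hYbdd : ∃ C, ∀ ω, |Y ω| ≤ C) (hTbdd : ∃ C, ∀ ω, |T ω| ≤ C)
    (hZbdd : ∃ C, ∀ ω, |Z ω| ≤ C)
    (θ0 f0 : 𝓧 → ℝ) (hθ0m : Measurable θ0) (hf0m : Measurable f0)
    (hθ0bdd : ∃ C, ∀ x, |θ0 x| ≤ C) (hf0bdd : ∃ C, ∀ x, |f0 x| ≤ C)
    (hIV : μ[fun ω => Y ω - θ0 (X ω) * T ω - f0 (X ω) |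
        MeasurableSpace.comap (fun ω => (Z ω, X ω)) inferInstance] =ᵐ[μ] 0)
    (q0 p0 r0 : 𝓧 → ℝ) (hq0m : Measurable q0) (hp0m : Measurable p0) (hr0m : Measurable r0)
    (hq0bdd : ∃ C, ∀ x, |q0 x| ≤ C) (hp0bdd : ∃ C, ∀ x, |p0 x| ≤ C)
    (hr0bdd : ∃ C, ∀ x, |r0 x| ≤ C)
    (hq0 : (fun ω => q0 (X ω)) =ᵐ[μ] μ[Y | MeasurableSpace.comap X inferInstance])
    (hp0 : (fun ω => p0 (X ω)) =ᵐ[μ] μ[T | MeasurableSpace.comap X inferInstance])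
    (hr0 : (fun ω => r0 (X ω)) =ᵐ[μ] μ[Z | MeasurableSpace.comap X inferInstance])
    (h0 : ℝ × 𝓧 → ℝ) (hh0m : Measurable h0) (hh0bdd : ∃ C, ∀ zx, |h0 zx| ≤ C)
    (hh0 : (fun ω => h0 (Z ω, X ω)) =ᵐ[μ]
        μ[T | MeasurableSpace.comap (fun ω => (Z ω, X ω)) inferInstance])
    (β0 : 𝓧 → ℝ) (hβ0m : Measurable β0) (hβ0bdd : ∃ C, ∀ x, |β0 x| ≤ C)
    (hβ0 : (fun ω => β0 (X ω)) =ᵐ[μ]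
        μ[fun ω => (T ω - p0 (X ω)) * (Z ω - r0 (X ω)) | MeasurableSpace.comap X inferInstance])
    (V0 : 𝓧 → ℝ) (hV0m : Measurable V0) (hV0bdd : ∃ C, ∀ x, |V0 x| ≤ C)
    (hV0 : (fun ω => V0 (X ω)) =ᵐ[μ]
        μ[fun ω => (h0 (Z ω, X ω) - p0 (X ω)) ^ 2 | MeasurableSpace.comap X inferInstance]) :
    ∀ θ : 𝓧 → ℝ, Measurable θ → (∃ C, ∀ x, |θ x| ≤ C) →
      ((∫ ω, (Y ω - q0 (X ω) - θ (X ω) * (h0 (Z ω, X ω) - p0 (X ω))) ^ 2 ∂μ)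
          = (∫ ω, (Y ω - q0 (X ω) - θ0 (X ω) * (h0 (Z ω, X ω) - p0 (X ω))) ^ 2 ∂μ)
            + ∫ ω, V0 (X ω) * (θ (X ω) - θ0 (X ω)) ^ 2 ∂μ)
      ∧ (∫ ω, (Y ω - q0 (X ω) - θ0 (X ω) * (h0 (Z ω, X ω) - p0 (X ω))) ^ 2 ∂μ)
          ≤ ∫ ω, (Y ω - q0 (X ω) - θ (X ω) * (h0 (Z ω, X ω) - p0 (X ω))) ^ 2 ∂μ :=
  stmt_2_general μ Y T Z X hY hT hZ hX hYbdd hTbdd θ0 f0 hθ0m hf0m hθ0bdd hf0bdd hIV q0 p0 hq0m hp0m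
    hq0bdd hp0bdd hp0 h0 hh0m hh0bdd hh0 V0 hV0m hV0bdd hV0
end

section
/- (Orthogonality of the DMLIV loss with respect to q.) For all bounded measurable functions μ and ν of X, the map (s, t) ↦ E[(Y − q0(X) − s·ν(X) − (θ0(X) + t·μ(X))·(h0(Z,X) − p0(X)))²] is smooth (it is a polynomial in (s,t)) and its mixed partial derivative ∂²/∂s∂t evaluated at (0,0) equals 0. -/
open MeasureTheory

section Aux

lemma int_of_bdd {Ω : Type*} [MeasurableSpace Ω] {μ : Measure Ω} [IsFiniteMeasure μ]
    {f : Ω → ℝ} (hm : Measurable f) (C : ℝ) (hC : ∀ ω, |f ω| ≤ C) :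
    Integrable f μ :=
  (integrable_const C).mono' hm.aestronglyMeasurable (ae_of_all _ fun ω => by
    simpa [Real.norm_eq_abs] using hC ω)

/-- key orthogonality: for m-measurable bounded g,
    ∫ g * E[T|m] = ∫ g * T -/
lemma integral_mul_condexp {Ω : Type*} {m : MeasurableSpace Ω} [m0 : MeasurableSpace Ω]
    (hm : m ≤ m0) {μ : Measure Ω} [IsProbabilityMeasure μ]
    {g T : Ω → ℝ} (hg : StronglyMeasurable[m] g) (hgm : Measurable g)
    (hgb : ∃ C, ∀ ω, |g ω| ≤ C)
    (hTm : Measurable T) (hTb : ∃ C, ∀ ω, |T ω| ≤ C) :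
    ∫ ω, g ω * (μ[T|m]) ω ∂μ = ∫ ω, g ω * T ω ∂μ := by
  obtain ⟨C, hC⟩ := hgb
  obtain ⟨D, hD⟩ := hTb
  have hTint : Integrable T μ := int_of_bdd hTm D hD
  have hgT : Integrable (g * T) μ := by
    refine int_of_bdd (hgm.mul hTm) (|C| * |D|) fun ω => ?_
    calc |g ω * T ω| = |g ω| * |T ω| := abs_mul _ _
      _ ≤ |C| * |D| := by
        have h1 := hC ω; have h2 := hD ω
        exact mul_le_mul (h1.trans (le_abs_self C)) (h2.trans (le_abs_self D))
          (abs_nonneg _) (abs_nonneg _)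
  have h := condExp_mul_of_stronglyMeasurable_left hg hgT hTint
  have h2 : ∫ ω, (μ[g * T|m]) ω ∂μ = ∫ ω, (g * T) ω ∂μ := integral_condExp hm
  calc ∫ ω, g ω * (μ[T|m]) ω ∂μ = ∫ ω, (μ[g * T|m]) ω ∂μ :=
        (integral_congr_ae (h.mono fun ω hω => by simpa using hω.symm))
    _ = ∫ ω, g ω * T ω ∂μ := h2

end Aux

theorem stmt_5
    {Ω 𝓧 : Type*} [MeasurableSpace Ω] [MeasurableSpace 𝓧] [StandardBorelSpace 𝓧]
    (μ : Measure Ω) [IsProbabilityMeasure μ]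
    (Y T Z : Ω → ℝ) (X : Ω → 𝓧)
    (hY : Measurable Y) (hT : Measurable T) (hZ : Measurable Z) (hX : Measurable X)
    (hYbdd : ∃ C, ∀ ω, |Y ω| ≤ C) (hTbdd : ∃ C, ∀ ω, |T ω| ≤ C)
    (hZbdd : ∃ C, ∀ ω, |Z ω| ≤ C)
    (θ0 f0 : 𝓧 → ℝ) (hθ0m : Measurable θ0) (hf0m : Measurable f0)
    (hθ0bdd : ∃ C, ∀ x, |θ0 x| ≤ C) (hf0bdd : ∃ C, ∀ x, |f0 x| ≤ C)
    (hIV : μ[fun ω => Y ω - θ0 (X ω) * T ω - f0 (X ω) |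
        MeasurableSpace.comap (fun ω => (Z ω, X ω)) inferInstance] =ᵐ[μ] 0)
    (q0 p0 r0 : 𝓧 → ℝ) (hq0m : Measurable q0) (hp0m : Measurable p0) (hr0m : Measurable r0)
    (hq0bdd : ∃ C, ∀ x, |q0 x| ≤ C) (hp0bdd : ∃ C, ∀ x, |p0 x| ≤ C)
    (hr0bdd : ∃ C, ∀ x, |r0 x| ≤ C)
    (hq0 : (fun ω => q0 (X ω)) =ᵐ[μ] μ[Y | MeasurableSpace.comap X inferInstance])
    (hp0 : (fun ω => p0 (X ω)) =ᵐ[μ] μ[T | MeasurableSpace.comap X inferInstance])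
    (hr0 : (fun ω => r0 (X ω)) =ᵐ[μ] μ[Z | MeasurableSpace.comap X inferInstance])
    (h0 : ℝ × 𝓧 → ℝ) (hh0m : Measurable h0) (hh0bdd : ∃ C, ∀ zx, |h0 zx| ≤ C)
    (hh0 : (fun ω => h0 (Z ω, X ω)) =ᵐ[μ]
        μ[T | MeasurableSpace.comap (fun ω => (Z ω, X ω)) inferInstance])
    (β0 : 𝓧 → ℝ) (hβ0m : Measurable β0) (hβ0bdd : ∃ C, ∀ x, |β0 x| ≤ C)
    (hβ0 : (fun ω => β0 (X ω)) =ᵐ[μ]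
        μ[fun ω => (T ω - p0 (X ω)) * (Z ω - r0 (X ω)) | MeasurableSpace.comap X inferInstance])
    (V0 : 𝓧 → ℝ) (hV0m : Measurable V0) (hV0bdd : ∃ C, ∀ x, |V0 x| ≤ C)
    (hV0 : (fun ω => V0 (X ω)) =ᵐ[μ]
        μ[fun ω => (h0 (Z ω, X ω) - p0 (X ω)) ^ 2 | MeasurableSpace.comap X inferInstance])
    (μf ν : 𝓧 → ℝ) (hμfm : Measurable μf) (hνm : Measurable ν)
    (hμfbdd : ∃ C, ∀ x, |μf x| ≤ C) (hνbdd : ∃ C, ∀ x, |ν x| ≤ C) :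
    ContDiff ℝ (⊤ : ℕ∞) (fun st : ℝ × ℝ => ∫ ω, (Y ω - q0 (X ω) - st.1 * ν (X ω)
        - (θ0 (X ω) + st.2 * μf (X ω)) * (h0 (Z ω, X ω) - p0 (X ω))) ^ 2 ∂μ)
    ∧ deriv (fun s : ℝ => deriv (fun t : ℝ => ∫ ω, (Y ω - q0 (X ω) - s * ν (X ω)
        - (θ0 (X ω) + t * μf (X ω)) * (h0 (Z ω, X ω) - p0 (X ω))) ^ 2 ∂μ) 0) 0 = 0 := by
  classical
  -- basic setup
  have hmZX : MeasurableSpace.comap (fun ω => (Z ω, X ω)) inferInstance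
      ≤ (inferInstance : MeasurableSpace Ω) := (hZ.prodMk hX).comap_le
  have hmX : MeasurableSpace.comap X inferInstance
      ≤ (inferInstance : MeasurableSpace Ω) := hX.comap_le
  -- abbreviations
  set A : Ω → ℝ := fun ω => Y ω - q0 (X ω) - θ0 (X ω) * (h0 (Z ω, X ω) - p0 (X ω)) with hAdef
  set B : Ω → ℝ := fun ω => ν (X ω) with hBdef
  set D : Ω → ℝ := fun ω => μf (X ω) * (h0 (Z ω, X ω) - p0 (X ω)) with hDdef
  have hAm : Measurable A := by
    apply Measurable.sub (hY.sub (hq0m.comp hX))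
    exact (hθ0m.comp hX).mul ((hh0m.comp (hZ.prodMk hX)).sub (hp0m.comp hX))
  have hBm : Measurable B := hνm.comp hX
  have hDm : Measurable D := (hμfm.comp hX).mul ((hh0m.comp (hZ.prodMk hX)).sub (hp0m.comp hX))
  have hAb : ∃ C, ∀ ω, |A ω| ≤ C := by
    obtain ⟨C1, h1⟩ := hYbdd; obtain ⟨C2, h2⟩ := hq0bdd; obtain ⟨C3, h3⟩ := hθ0bdd
    obtain ⟨C4, h4⟩ := hh0bdd; obtain ⟨C5, h5⟩ := hp0bdd
    refine ⟨C1 + C2 + |C3| * (C4 + C5), fun ω => ?_⟩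
    have hb : |h0 (Z ω, X ω) - p0 (X ω)| ≤ C4 + C5 :=
      (abs_sub _ _).trans (add_le_add (h4 _) (h5 _))
    simp only [hAdef]
    calc |Y ω - q0 (X ω) - θ0 (X ω) * (h0 (Z ω, X ω) - p0 (X ω))|
        ≤ |Y ω - q0 (X ω)| + |θ0 (X ω) * (h0 (Z ω, X ω) - p0 (X ω))| := abs_sub _ _
      _ ≤ (|Y ω| + |q0 (X ω)|) + |θ0 (X ω)| * |h0 (Z ω, X ω) - p0 (X ω)| := by
          rw [abs_mul]; exact add_le_add_left (abs_sub _ _) _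
      _ ≤ C1 + C2 + |C3| * (C4 + C5) :=
          add_le_add (add_le_add (h1 ω) (h2 _))
            (mul_le_mul ((h3 _).trans (le_abs_self _)) hb (abs_nonneg _) (abs_nonneg _))
  have hBb : ∃ C, ∀ ω, |B ω| ≤ C := by
    obtain ⟨C, h⟩ := hνbdd; exact ⟨C, fun ω => h (X ω)⟩
  have hDb : ∃ C, ∀ ω, |D ω| ≤ C := by
    obtain ⟨C1, h1⟩ := hμfbdd; obtain ⟨C4, h4⟩ := hh0bdd; obtain ⟨C5, h5⟩ := hp0bdd
    refine ⟨|C1| * (C4 + C5), fun ω => ?_⟩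
    rw [hDdef]; simp only []
    rw [abs_mul]
    exact mul_le_mul ((h1 _).trans (le_abs_self _))
      ((abs_sub _ _).trans (add_le_add (h4 _) (h5 _))) (abs_nonneg _)
      (abs_nonneg _)
  -- integrability of products
  have intmul : ∀ {f g : Ω → ℝ}, Measurable f → (∃ C, ∀ ω, |f ω| ≤ C) → Measurable g →
      (∃ C, ∀ ω, |g ω| ≤ C) → Integrable (fun ω => f ω * g ω) μ := by
    intro f g hfm ⟨C, hC⟩ hgm ⟨E, hE⟩
    refine int_of_bdd (hfm.mul hgm) (|C| * |E|) fun ω => ?_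
    rw [abs_mul]
    exact mul_le_mul ((hC ω).trans (le_abs_self _)) ((hE ω).trans (le_abs_self _))
      (abs_nonneg _) (abs_nonneg _)
  -- key orthogonality
  have key : ∀ (g : 𝓧 → ℝ), Measurable g → (∃ C, ∀ x, |g x| ≤ C) →
      ∫ ω, g (X ω) * (h0 (Z ω, X ω) - p0 (X ω)) ∂μ = 0 := by
    intro g hgm ⟨C, hC⟩
    have hgXb : ∃ C, ∀ ω, |g (X ω)| ≤ C := ⟨C, fun ω => hC (X ω)⟩
    have hgXm : Measurable fun ω => g (X ω) := hgm.comp hX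
    -- strongly measurable wrt mZX and mX
    have hsmZX : StronglyMeasurable[MeasurableSpace.comap (fun ω => (Z ω, X ω)) inferInstance] fun ω => g (X ω) := by
      have : Measurable[MeasurableSpace.comap (fun ω => (Z ω, X ω)) inferInstance] (fun ω => (Z ω, X ω)) := Measurable.of_comap_le le_rfl
      exact ((hgm.comp measurable_snd).comp this).stronglyMeasurable
    have hsmX : StronglyMeasurable[MeasurableSpace.comap X inferInstance] fun ω => g (X ω) := by
      have : Measurable[MeasurableSpace.comap X inferInstance] X := Measurable.of_comap_le le_rfl
      exact (hgm.comp this).stronglyMeasurable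
    have e1 : ∫ ω, g (X ω) * h0 (Z ω, X ω) ∂μ = ∫ ω, g (X ω) * T ω ∂μ := by
      have := integral_mul_condexp (μ := μ) hmZX hsmZX hgXm hgXb hT hTbdd
      rw [← this]
      exact integral_congr_ae (hh0.mono fun ω hω => congrArg (fun y => g (X ω) * y) hω)
    have e2 : ∫ ω, g (X ω) * p0 (X ω) ∂μ = ∫ ω, g (X ω) * T ω ∂μ := by
      have := integral_mul_condexp (μ := μ) hmX hsmX hgXm hgXb hT hTbdd
      rw [← this]
      exact integral_congr_ae (hp0.mono fun ω hω => congrArg (fun y => g (X ω) * y) hω)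
    have hi1 : Integrable (fun ω => g (X ω) * h0 (Z ω, X ω)) μ := by
      obtain ⟨C4, h4⟩ := hh0bdd
      exact intmul hgXm hgXb (hh0m.comp (hZ.prodMk hX)) ⟨C4, fun ω => h4 _⟩
    have hi2 : Integrable (fun ω => g (X ω) * p0 (X ω)) μ := by
      obtain ⟨C5, h5⟩ := hp0bdd
      exact intmul hgXm hgXb (hp0m.comp hX) ⟨C5, fun ω => h5 _⟩
    have : ∫ ω, g (X ω) * (h0 (Z ω, X ω) - p0 (X ω)) ∂μ
        = ∫ ω, g (X ω) * h0 (Z ω, X ω) ∂μ - ∫ ω, g (X ω) * p0 (X ω) ∂μ := by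
      rw [← integral_sub hi1 hi2]
      congr 1; funext ω; ring
    rw [this, e1, e2, sub_self]
  -- the key consequence: ∫ B * D = 0
  have hBD : ∫ ω, B ω * D ω ∂μ = 0 := by
    obtain ⟨C1, h1⟩ := hνbdd; obtain ⟨C2, h2⟩ := hμfbdd
    have := key (fun x => ν x * μf x) (hνm.mul hμfm)
      ⟨|C1| * |C2|, fun x => by
        rw [abs_mul]
        exact mul_le_mul ((h1 x).trans (le_abs_self _)) ((h2 x).trans (le_abs_self _))
          (abs_nonneg _) (abs_nonneg _)⟩
    rw [← this]
    congr 1; funext ω; simp only [hBdef, hDdef]; ring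
  -- polynomial form of the objective
  set a := ∫ ω, A ω * A ω ∂μ
  set b := ∫ ω, A ω * B ω ∂μ
  set c := ∫ ω, A ω * D ω ∂μ
  set d := ∫ ω, B ω * B ω ∂μ
  set e := ∫ ω, B ω * D ω ∂μ
  set f := ∫ ω, D ω * D ω ∂μ
  have hpoly : ∀ s t : ℝ, ∫ ω, (Y ω - q0 (X ω) - s * ν (X ω)
      - (θ0 (X ω) + t * μf (X ω)) * (h0 (Z ω, X ω) - p0 (X ω))) ^ 2 ∂μ
      = a - 2*s*b - 2*t*c + s^2*d + 2*s*t*e + t^2*f := by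
    intro s t
    have heq : ∀ ω, (Y ω - q0 (X ω) - s * ν (X ω)
        - (θ0 (X ω) + t * μf (X ω)) * (h0 (Z ω, X ω) - p0 (X ω))) ^ 2
        = A ω * A ω - (2*s) * (A ω * B ω) - (2*t) * (A ω * D ω)
          + s^2 * (B ω * B ω) + (2*s*t) * (B ω * D ω) + t^2 * (D ω * D ω) := by
      intro ω; simp only [hAdef, hBdef, hDdef]; ring
    have iAA := intmul hAm hAb hAm hAb
    have iAB := intmul hAm hAb hBm hBb
    have iAD := intmul hAm hAb hDm hDb
    have iBB := intmul hBm hBb hBm hBb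
    have iBD := intmul hBm hBb hDm hDb
    have iDD := intmul hDm hDb hDm hDb
    calc ∫ ω, (Y ω - q0 (X ω) - s * ν (X ω)
          - (θ0 (X ω) + t * μf (X ω)) * (h0 (Z ω, X ω) - p0 (X ω))) ^ 2 ∂μ
        = ∫ ω, (A ω * A ω - (2*s) * (A ω * B ω) - (2*t) * (A ω * D ω)
          + s^2 * (B ω * B ω) + (2*s*t) * (B ω * D ω) + t^2 * (D ω * D ω)) ∂μ := by
          exact integral_congr_ae (ae_of_all _ fun ω => heq ω)
      _ = a - 2*s*b - 2*t*c + s^2*d + 2*s*t*e + t^2*f := by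
          have i2s : Integrable (fun ω => 2*s*(A ω * B ω)) μ := iAB.const_mul _
          have i2t : Integrable (fun ω => 2*t*(A ω * D ω)) μ := iAD.const_mul _
          have is2 : Integrable (fun ω => s^2*(B ω * B ω)) μ := iBB.const_mul _
          have ist : Integrable (fun ω => 2*s*t*(B ω * D ω)) μ := iBD.const_mul _
          have it2 : Integrable (fun ω => t^2*(D ω * D ω)) μ := iDD.const_mul _
          have hP2 : Integrable (fun ω => A ω*A ω - 2*s*(A ω*B ω)) μ := iAA.sub i2s
          have hP3 : Integrable (fun ω => A ω*A ω - 2*s*(A ω*B ω) - 2*t*(A ω*D ω)) μ :=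
            hP2.sub i2t
          have hP4 : Integrable (fun ω => A ω*A ω - 2*s*(A ω*B ω) - 2*t*(A ω*D ω)
              + s^2*(B ω*B ω)) μ := hP3.add is2
          have hP5 : Integrable (fun ω => A ω*A ω - 2*s*(A ω*B ω) - 2*t*(A ω*D ω)
              + s^2*(B ω*B ω) + 2*s*t*(B ω*D ω)) μ := hP4.add ist
          rw [integral_add hP5 it2, integral_add hP4 ist, integral_add hP3 is2,
            integral_sub hP2 i2t, integral_sub iAA i2s,
            integral_const_mul, integral_const_mul, integral_const_mul, integral_const_mul,
            integral_const_mul]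
  constructor
  · have : (fun st : ℝ × ℝ => ∫ ω, (Y ω - q0 (X ω) - st.1 * ν (X ω)
        - (θ0 (X ω) + st.2 * μf (X ω)) * (h0 (Z ω, X ω) - p0 (X ω))) ^ 2 ∂μ)
        = fun st : ℝ × ℝ => a - 2*st.1*b - 2*st.2*c + st.1^2*d + 2*st.1*st.2*e + st.2^2*f := by
      funext st; exact hpoly st.1 st.2
    rw [this]
    fun_prop
  · have hinner : ∀ s : ℝ, deriv (fun t : ℝ => ∫ ω, (Y ω - q0 (X ω) - s * ν (X ω)
        - (θ0 (X ω) + t * μf (X ω)) * (h0 (Z ω, X ω) - p0 (X ω))) ^ 2 ∂μ) 0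
        = -2*c + 2*s*e := by
      intro s
      have : (fun t : ℝ => ∫ ω, (Y ω - q0 (X ω) - s * ν (X ω)
          - (θ0 (X ω) + t * μf (X ω)) * (h0 (Z ω, X ω) - p0 (X ω))) ^ 2 ∂μ)
          = fun t => a - 2*s*b - 2*t*c + s^2*d + 2*s*t*e + t^2*f := by
        funext t; exact hpoly s t
      rw [this]
      have hd : HasDerivAt (fun t : ℝ => a - 2*s*b - 2*t*c + s^2*d + 2*s*t*e + t^2*f)
          (-2*c + 2*s*e) 0 := by
        have h1 : HasDerivAt (fun t : ℝ => a - 2*s*b - 2*t*c + s^2*d + 2*s*t*e + t^2*f)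
            (0 - 0 - (1*(2*c)) + 0 + (1*(2*s*e)) + ((2*(0:ℝ)^1)*f)) 0 := by
          apply HasDerivAt.add
          apply HasDerivAt.add
          apply HasDerivAt.add
          apply HasDerivAt.sub
          apply HasDerivAt.sub
          · exact hasDerivAt_const _ _
          · exact (hasDerivAt_const _ _)
          · simpa [mul_comm, mul_assoc, mul_left_comm] using
              ((hasDerivAt_id (0:ℝ)).mul_const c).const_mul 2
          · exact hasDerivAt_const _ _
          · simpa [mul_comm, mul_assoc, mul_left_comm] using
              ((hasDerivAt_id (0:ℝ)).const_mul (2*s*e))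
          · exact (hasDerivAt_pow 2 (0:ℝ)).mul_const f
        convert h1 using 1
        ring
      rw [hd.deriv]
    have : (fun s : ℝ => deriv (fun t : ℝ => ∫ ω, (Y ω - q0 (X ω) - s * ν (X ω)
        - (θ0 (X ω) + t * μf (X ω)) * (h0 (Z ω, X ω) - p0 (X ω))) ^ 2 ∂μ) 0)
        = fun s => -2*c + 2*s*e := funext hinner
    rw [this]
    have hd2 : HasDerivAt (fun s : ℝ => -2*c + 2*s*e) (2*e) 0 := by
      have : HasDerivAt (fun s : ℝ => -2*c + 2*s*e) (0 + 1*(2*e)) 0 := by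
        apply HasDerivAt.add (hasDerivAt_const _ _)
        simpa [mul_comm, mul_assoc, mul_left_comm] using
          ((hasDerivAt_id (0:ℝ)).const_mul (2*e))
      simpa using this
    rw [hd2.deriv, hBD]
    simp [e, hBD]
end

section
/- (Orthogonality of the DMLIV loss with respect to p.) For all bounded measurable functions μ and ν of X, the map (s, t) ↦ E[(Y − q0(X) − (θ0(X) + t·μ(X))·(h0(Z,X) − p0(X) − s·ν(X)))²] is smooth (a polynomial in (s,t)) and its mixed partial derivative ∂²/∂s∂t evaluated at (0,0) equals 0. -/
open MeasureTheory

section aux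

lemma bddMulFn {α : Type*} {f g : α → ℝ} (hf : ∃ C, ∀ x, |f x| ≤ C) (hg : ∃ C, ∀ x, |g x| ≤ C) :
    ∃ C, ∀ x, |f x * g x| ≤ C := by
  obtain ⟨Cf, hCf⟩ := hf
  obtain ⟨Cg, hCg⟩ := hg
  refine ⟨|Cf| * |Cg|, fun x => ?_⟩
  rw [abs_mul]
  exact mul_le_mul ((hCf x).trans (le_abs_self _)) ((hCg x).trans (le_abs_self _))
    (abs_nonneg _) (abs_nonneg _)

lemma bddSubFn {α : Type*} {f g : α → ℝ} (hf : ∃ C, ∀ x, |f x| ≤ C) (hg : ∃ C, ∀ x, |g x| ≤ C) :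
    ∃ C, ∀ x, |f x - g x| ≤ C := by
  obtain ⟨Cf, hCf⟩ := hf
  obtain ⟨Cg, hCg⟩ := hg
  exact ⟨Cf + Cg, fun x => (abs_sub _ _).trans (add_le_add (hCf x) (hCg x))⟩

lemma bddNegFn {α : Type*} {f : α → ℝ} (hf : ∃ C, ∀ x, |f x| ≤ C) :
    ∃ C, ∀ x, |-f x| ≤ C := by
  obtain ⟨Cf, hCf⟩ := hf
  exact ⟨Cf, fun x => by simpa using hCf x⟩

lemma bddIntegrable {Ω : Type*} [MeasurableSpace Ω] {μ : Measure Ω} [IsProbabilityMeasure μ]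
    {f : Ω → ℝ} (hf : Measurable f) (hb : ∃ C, ∀ ω, |f ω| ≤ C) : Integrable f μ := by
  obtain ⟨C, hC⟩ := hb
  exact Integrable.mono' (integrable_const C) hf.aestronglyMeasurable
    (Filter.Eventually.of_forall fun ω => by simpa [Real.norm_eq_abs] using hC ω)

lemma mulIntegrable {Ω : Type*} [MeasurableSpace Ω] {μ : Measure Ω} [IsProbabilityMeasure μ]
    {f g : Ω → ℝ} (hf : Measurable f) (hg : Measurable g)
    (hfb : ∃ C, ∀ ω, |f ω| ≤ C) (hgb : ∃ C, ∀ ω, |g ω| ≤ C) :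
    Integrable (fun ω => f ω * g ω) μ := by
  obtain ⟨C, hC⟩ := hfb
  exact (bddIntegrable hg hgb).bdd_mul (c := C) hf.aestronglyMeasurable
    (Filter.Eventually.of_forall fun x => by simpa [Real.norm_eq_abs] using hC x)

lemma integral_mul_eq_zero {Ω : Type*} [mΩ : MeasurableSpace Ω] {μ : Measure Ω}
    [IsProbabilityMeasure μ] {m : MeasurableSpace Ω} (hm : m ≤ mΩ)
    {g F : Ω → ℝ} (hg : StronglyMeasurable[m] g) (hgB : ∃ C, ∀ ω, |g ω| ≤ C)
    (hF : Integrable F μ) (hcond : μ[F|m] =ᵐ[μ] 0) :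
    ∫ ω, g ω * F ω ∂μ = 0 := by
  obtain ⟨C, hC⟩ := hgB
  have hgae : @AEStronglyMeasurable _ _ _ mΩ mΩ g μ := (hg.mono hm).aestronglyMeasurable
  have hgF : Integrable (fun ω => g ω * F ω) μ :=
    hF.bdd_mul (c := C) hgae (Filter.Eventually.of_forall fun x => by simpa [Real.norm_eq_abs] using hC x)
  have hpull : μ[g * F|m] =ᵐ[μ] g * μ[F|m] :=
    condExp_mul_of_stronglyMeasurable_left hg hgF hF
  calc ∫ ω, g ω * F ω ∂μ = ∫ ω, (μ[g * F|m]) ω ∂μ := (integral_condExp hm).symm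
    _ = ∫ ω, g ω * (μ[F|m]) ω ∂μ := integral_congr_ae hpull
    _ = ∫ ω, g ω * (0 : ℝ) ∂μ := by
        refine integral_congr_ae ?_
        filter_upwards [hcond] with ω hω
        simp [hω]
    _ = 0 := by simp

lemma deriv_quadratic (A B C : ℝ) : deriv (fun t : ℝ => A + B * t + C * t ^ 2) 0 = B := by
  have h : HasDerivAt (fun t : ℝ => A + B * t + C * t ^ 2)
      (0 + B * 1 + C * (↑2 * (0 : ℝ) ^ (2 - 1))) 0 := by
    exact ((hasDerivAt_const (0 : ℝ) A).add ((hasDerivAt_id (0 : ℝ)).const_mul B)).add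
      ((hasDerivAt_pow 2 (0 : ℝ)).const_mul C)
  simpa using h.deriv

lemma poly_core {Ω : Type*} [MeasurableSpace Ω] (μ : Measure Ω) [IsProbabilityMeasure μ]
    (a b c d : Ω → ℝ) (ha : Measurable a) (hb : Measurable b) (hc : Measurable c)
    (hd : Measurable d) (hab : ∃ C, ∀ ω, |a ω| ≤ C) (hbb : ∃ C, ∀ ω, |b ω| ≤ C)
    (hcb : ∃ C, ∀ ω, |c ω| ≤ C) (hdb : ∃ C, ∀ ω, |d ω| ≤ C)
    (hkey : ∫ ω, (a ω * d ω + b ω * c ω) ∂μ = 0) :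
    ContDiff ℝ (⊤ : ℕ∞) (fun st : ℝ × ℝ =>
      ∫ ω, (a ω + st.1 * b ω + st.2 * c ω + st.1 * st.2 * d ω) ^ 2 ∂μ)
    ∧ deriv (fun s : ℝ => deriv (fun t : ℝ =>
      ∫ ω, (a ω + s * b ω + t * c ω + s * t * d ω) ^ 2 ∂μ) 0) 0 = 0 := by
  have Iaa := mulIntegrable (μ := μ) ha ha hab hab
  have Iab := mulIntegrable (μ := μ) ha hb hab hbb
  have Iac := mulIntegrable (μ := μ) ha hc hab hcb
  have Iad := mulIntegrable (μ := μ) ha hd hab hdb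
  have Ibb := mulIntegrable (μ := μ) hb hb hbb hbb
  have Ibc := mulIntegrable (μ := μ) hb hc hbb hcb
  have Ibd := mulIntegrable (μ := μ) hb hd hbb hdb
  have Icc := mulIntegrable (μ := μ) hc hc hcb hcb
  have Icd := mulIntegrable (μ := μ) hc hd hcb hdb
  have Idd := mulIntegrable (μ := μ) hd hd hdb hdb
  set Jaa := ∫ ω, a ω * a ω ∂μ
  set Jab := ∫ ω, a ω * b ω ∂μ
  set Jac := ∫ ω, a ω * c ω ∂μ
  set Jk := ∫ ω, (a ω * d ω + b ω * c ω) ∂μ with hJk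
  set Jbb := ∫ ω, b ω * b ω ∂μ
  set Jbd := ∫ ω, b ω * d ω ∂μ
  set Jcc := ∫ ω, c ω * c ω ∂μ
  set Jcd := ∫ ω, c ω * d ω ∂μ
  set Jdd := ∫ ω, d ω * d ω ∂μ
  have hexp : ∀ s t : ℝ, ∫ ω, (a ω + s * b ω + t * c ω + s * t * d ω) ^ 2 ∂μ
      = Jaa + 2 * s * Jab + 2 * t * Jac + 2 * (s * t) * Jk + s ^ 2 * Jbb + t ^ 2 * Jcc
        + 2 * (s ^ 2 * t) * Jbd + 2 * (s * t ^ 2) * Jcd + (s * t) ^ 2 * Jdd := by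
    intro s t
    have Ik : Integrable (fun ω => a ω * d ω + b ω * c ω) μ := by exact Iad.add Ibc
    have I2 : Integrable (fun ω => (2 * s) * (a ω * b ω)) μ := Iab.const_mul _
    have I3 : Integrable (fun ω => (2 * t) * (a ω * c ω)) μ := Iac.const_mul _
    have I4 : Integrable (fun ω => (2 * (s * t)) * (a ω * d ω + b ω * c ω)) μ := Ik.const_mul _
    have I5 : Integrable (fun ω => (s ^ 2) * (b ω * b ω)) μ := Ibb.const_mul _
    have I6 : Integrable (fun ω => (t ^ 2) * (c ω * c ω)) μ := Icc.const_mul _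
    have I7 : Integrable (fun ω => (2 * (s ^ 2 * t)) * (b ω * d ω)) μ := Ibd.const_mul _
    have I8 : Integrable (fun ω => (2 * (s * t ^ 2)) * (c ω * d ω)) μ := Icd.const_mul _
    have I9 : Integrable (fun ω => (s * t) ^ 2 * (d ω * d ω)) μ := Idd.const_mul _
    have R9 := I9
    have R8 : Integrable (fun ω => (2 * (s * t ^ 2)) * (c ω * d ω)
        + (s * t) ^ 2 * (d ω * d ω)) μ := by exact I8.add R9
    have R7 : Integrable (fun ω => (2 * (s ^ 2 * t)) * (b ω * d ω)
        + ((2 * (s * t ^ 2)) * (c ω * d ω) + (s * t) ^ 2 * (d ω * d ω))) μ := by exact I7.add R8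
    have R6 : Integrable (fun ω => (t ^ 2) * (c ω * c ω) + ((2 * (s ^ 2 * t)) * (b ω * d ω)
        + ((2 * (s * t ^ 2)) * (c ω * d ω) + (s * t) ^ 2 * (d ω * d ω)))) μ := by exact I6.add R7
    have R5 : Integrable (fun ω => (s ^ 2) * (b ω * b ω) + ((t ^ 2) * (c ω * c ω)
        + ((2 * (s ^ 2 * t)) * (b ω * d ω) + ((2 * (s * t ^ 2)) * (c ω * d ω)
        + (s * t) ^ 2 * (d ω * d ω))))) μ := by exact I5.add R6
    have R4 : Integrable (fun ω => (2 * (s * t)) * (a ω * d ω + b ω * c ω)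
        + ((s ^ 2) * (b ω * b ω) + ((t ^ 2) * (c ω * c ω) + ((2 * (s ^ 2 * t)) * (b ω * d ω)
        + ((2 * (s * t ^ 2)) * (c ω * d ω) + (s * t) ^ 2 * (d ω * d ω)))))) μ := by
      exact I4.add R5
    have R3 : Integrable (fun ω => (2 * t) * (a ω * c ω)
        + ((2 * (s * t)) * (a ω * d ω + b ω * c ω)
        + ((s ^ 2) * (b ω * b ω) + ((t ^ 2) * (c ω * c ω) + ((2 * (s ^ 2 * t)) * (b ω * d ω)
        + ((2 * (s * t ^ 2)) * (c ω * d ω) + (s * t) ^ 2 * (d ω * d ω))))))) μ := by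
      exact I3.add R4
    have R2 : Integrable (fun ω => (2 * s) * (a ω * b ω) + ((2 * t) * (a ω * c ω)
        + ((2 * (s * t)) * (a ω * d ω + b ω * c ω)
        + ((s ^ 2) * (b ω * b ω) + ((t ^ 2) * (c ω * c ω) + ((2 * (s ^ 2 * t)) * (b ω * d ω)
        + ((2 * (s * t ^ 2)) * (c ω * d ω) + (s * t) ^ 2 * (d ω * d ω)))))))) μ := by
      exact I2.add R3
    rw [show (fun ω => (a ω + s * b ω + t * c ω + s * t * d ω) ^ 2)
        = fun ω => a ω * a ω + ((2 * s) * (a ω * b ω) + ((2 * t) * (a ω * c ω)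
          + ((2 * (s * t)) * (a ω * d ω + b ω * c ω) + ((s ^ 2) * (b ω * b ω)
          + ((t ^ 2) * (c ω * c ω) + ((2 * (s ^ 2 * t)) * (b ω * d ω)
          + ((2 * (s * t ^ 2)) * (c ω * d ω) + (s * t) ^ 2 * (d ω * d ω))))))))
      from funext fun ω => by ring]
    rw [integral_add Iaa R2, integral_add I2 R3, integral_add I3 R4, integral_add I4 R5,
      integral_add I5 R6, integral_add I6 R7, integral_add I7 R8, integral_add I8 R9]
    simp only [integral_const_mul]
    ring
  constructor
  · rw [show (fun st : ℝ × ℝ =>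
        ∫ ω, (a ω + st.1 * b ω + st.2 * c ω + st.1 * st.2 * d ω) ^ 2 ∂μ)
        = fun st : ℝ × ℝ => Jaa + 2 * st.1 * Jab + 2 * st.2 * Jac + 2 * (st.1 * st.2) * Jk
          + st.1 ^ 2 * Jbb + st.2 ^ 2 * Jcc + 2 * (st.1 ^ 2 * st.2) * Jbd
          + 2 * (st.1 * st.2 ^ 2) * Jcd + (st.1 * st.2) ^ 2 * Jdd
      from funext fun st => hexp st.1 st.2]
    fun_prop
  · have hinner : (fun s : ℝ => deriv (fun t : ℝ =>
        ∫ ω, (a ω + s * b ω + t * c ω + s * t * d ω) ^ 2 ∂μ) 0)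
        = fun s : ℝ => (2 * Jac) + (2 * Jk) * s + (2 * Jbd) * s ^ 2 := by
      funext s
      rw [show (fun t : ℝ => ∫ ω, (a ω + s * b ω + t * c ω + s * t * d ω) ^ 2 ∂μ)
          = fun t : ℝ => (Jaa + 2 * s * Jab + s ^ 2 * Jbb)
            + (2 * Jac + (2 * Jk) * s + (2 * Jbd) * s ^ 2) * t
            + (Jcc + 2 * s * Jcd + s ^ 2 * Jdd) * t ^ 2
        from funext fun t => by rw [hexp s t]; ring]
      rw [deriv_quadratic]
    rw [hinner, deriv_quadratic]
    rw [hkey]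
    ring

end aux

theorem stmt_6
    {Ω 𝓧 : Type*} [MeasurableSpace Ω] [MeasurableSpace 𝓧] [StandardBorelSpace 𝓧]
    (μ : Measure Ω) [IsProbabilityMeasure μ]
    (Y T Z : Ω → ℝ) (X : Ω → 𝓧)
    (hY : Measurable Y) (hT : Measurable T) (hZ : Measurable Z) (hX : Measurable X)
    (hYbdd : ∃ C, ∀ ω, |Y ω| ≤ C) (hTbdd : ∃ C, ∀ ω, |T ω| ≤ C)
    (hZbdd : ∃ C, ∀ ω, |Z ω| ≤ C)
    (θ0 f0 : 𝓧 → ℝ) (hθ0m : Measurable θ0) (hf0m : Measurable f0)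
    (hθ0bdd : ∃ C, ∀ x, |θ0 x| ≤ C) (hf0bdd : ∃ C, ∀ x, |f0 x| ≤ C)
    (hIV : μ[fun ω => Y ω - θ0 (X ω) * T ω - f0 (X ω) |
        MeasurableSpace.comap (fun ω => (Z ω, X ω)) inferInstance] =ᵐ[μ] 0)
    (q0 p0 r0 : 𝓧 → ℝ) (hq0m : Measurable q0) (hp0m : Measurable p0) (hr0m : Measurable r0)
    (hq0bdd : ∃ C, ∀ x, |q0 x| ≤ C) (hp0bdd : ∃ C, ∀ x, |p0 x| ≤ C)
    (hr0bdd : ∃ C, ∀ x, |r0 x| ≤ C)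
    (hq0 : (fun ω => q0 (X ω)) =ᵐ[μ] μ[Y | MeasurableSpace.comap X inferInstance])
    (hp0 : (fun ω => p0 (X ω)) =ᵐ[μ] μ[T | MeasurableSpace.comap X inferInstance])
    (hr0 : (fun ω => r0 (X ω)) =ᵐ[μ] μ[Z | MeasurableSpace.comap X inferInstance])
    (h0 : ℝ × 𝓧 → ℝ) (hh0m : Measurable h0) (hh0bdd : ∃ C, ∀ zx, |h0 zx| ≤ C)
    (hh0 : (fun ω => h0 (Z ω, X ω)) =ᵐ[μ]
        μ[T | MeasurableSpace.comap (fun ω => (Z ω, X ω)) inferInstance])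
    (β0 : 𝓧 → ℝ) (hβ0m : Measurable β0) (hβ0bdd : ∃ C, ∀ x, |β0 x| ≤ C)
    (hβ0 : (fun ω => β0 (X ω)) =ᵐ[μ]
        μ[fun ω => (T ω - p0 (X ω)) * (Z ω - r0 (X ω)) | MeasurableSpace.comap X inferInstance])
    (V0 : 𝓧 → ℝ) (hV0m : Measurable V0) (hV0bdd : ∃ C, ∀ x, |V0 x| ≤ C)
    (hV0 : (fun ω => V0 (X ω)) =ᵐ[μ]
        μ[fun ω => (h0 (Z ω, X ω) - p0 (X ω)) ^ 2 | MeasurableSpace.comap X inferInstance])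
    (μf ν : 𝓧 → ℝ) (hμfm : Measurable μf) (hνm : Measurable ν)
    (hμfbdd : ∃ C, ∀ x, |μf x| ≤ C) (hνbdd : ∃ C, ∀ x, |ν x| ≤ C) :
    ContDiff ℝ (⊤ : ℕ∞) (fun st : ℝ × ℝ => ∫ ω, (Y ω - q0 (X ω)
        - (θ0 (X ω) + st.2 * μf (X ω)) * (h0 (Z ω, X ω) - p0 (X ω) - st.1 * ν (X ω))) ^ 2 ∂μ)
    ∧ deriv (fun s : ℝ => deriv (fun t : ℝ => ∫ ω, (Y ω - q0 (X ω)
        - (θ0 (X ω) + t * μf (X ω)) * (h0 (Z ω, X ω) - p0 (X ω) - s * ν (X ω))) ^ 2 ∂μ) 0) 0 = 0 := by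
  have hZX : Measurable fun ω => (Z ω, X ω) := hZ.prodMk hX
  have hm : MeasurableSpace.comap X inferInstance ≤ (inferInstance : MeasurableSpace Ω) :=
    hX.comap_le
  have hm2 : MeasurableSpace.comap (fun ω => (Z ω, X ω)) inferInstance
      ≤ (inferInstance : MeasurableSpace Ω) := hZX.comap_le
  have hle : MeasurableSpace.comap X inferInstance
      ≤ MeasurableSpace.comap (fun ω => (Z ω, X ω)) inferInstance := by
    rw [show X = Prod.snd ∘ (fun ω => (Z ω, X ω)) from rfl, ← MeasurableSpace.comap_comp]
    exact MeasurableSpace.comap_mono measurable_snd.comap_le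
  have hXm : Measurable[MeasurableSpace.comap X inferInstance] X :=
    measurable_iff_comap_le.mpr le_rfl
  -- the four building blocks
  set a : Ω → ℝ := fun ω => Y ω - q0 (X ω) - θ0 (X ω) * (h0 (Z ω, X ω) - p0 (X ω)) with ha_def
  set b : Ω → ℝ := fun ω => θ0 (X ω) * ν (X ω) with hb_def
  set c : Ω → ℝ := fun ω => -(μf (X ω) * (h0 (Z ω, X ω) - p0 (X ω))) with hc_def
  set d : Ω → ℝ := fun ω => μf (X ω) * ν (X ω) with hd_def
  -- measurability
  have hma : Measurable a := (hY.sub (hq0m.comp hX)).sub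
    ((hθ0m.comp hX).mul ((hh0m.comp hZX).sub (hp0m.comp hX)))
  have hmb : Measurable b := (hθ0m.comp hX).mul (hνm.comp hX)
  have hmc : Measurable c := ((hμfm.comp hX).mul ((hh0m.comp hZX).sub (hp0m.comp hX))).neg
  have hmd : Measurable d := (hμfm.comp hX).mul (hνm.comp hX)
  -- boundedness
  have bY : ∃ C, ∀ ω, |Y ω| ≤ C := hYbdd
  have bq : ∃ C, ∀ ω, |q0 (X ω)| ≤ C := hq0bdd.imp fun C h ω => h _
  have bθ : ∃ C, ∀ ω, |θ0 (X ω)| ≤ C := hθ0bdd.imp fun C h ω => h _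
  have bp : ∃ C, ∀ ω, |p0 (X ω)| ≤ C := hp0bdd.imp fun C h ω => h _
  have bh : ∃ C, ∀ ω, |h0 (Z ω, X ω)| ≤ C := hh0bdd.imp fun C h ω => h _
  have bμ : ∃ C, ∀ ω, |μf (X ω)| ≤ C := hμfbdd.imp fun C h ω => h _
  have bν : ∃ C, ∀ ω, |ν (X ω)| ≤ C := hνbdd.imp fun C h ω => h _
  have bhp : ∃ C, ∀ ω, |h0 (Z ω, X ω) - p0 (X ω)| ≤ C := bddSubFn bh bp
  have bba : ∃ C, ∀ ω, |a ω| ≤ C := bddSubFn (bddSubFn bY bq) (bddMulFn bθ bhp)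
  have bbb : ∃ C, ∀ ω, |b ω| ≤ C := bddMulFn bθ bν
  have bbc : ∃ C, ∀ ω, |c ω| ≤ C := bddNegFn (bddMulFn bμ bhp)
  have bbd : ∃ C, ∀ ω, |d ω| ≤ C := bddMulFn bμ bν
  -- the key orthogonality
  have hF1int : Integrable (fun ω => Y ω - q0 (X ω)) μ :=
    (bddIntegrable hY bY).sub (bddIntegrable (hq0m.comp hX) bq)
  have hq0Xint : Integrable (fun ω => q0 (X ω)) μ := bddIntegrable (hq0m.comp hX) bq
  have hp0Xint : Integrable (fun ω => p0 (X ω)) μ := bddIntegrable (hp0m.comp hX) bp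
  have hh0int : Integrable (fun ω => h0 (Z ω, X ω)) μ := bddIntegrable (hh0m.comp hZX) bh
  have hF2int : Integrable (fun ω => h0 (Z ω, X ω) - p0 (X ω)) μ := hh0int.sub hp0Xint
  have hq0sm : StronglyMeasurable[MeasurableSpace.comap X inferInstance] fun ω => q0 (X ω) := (hq0m.comp hXm).stronglyMeasurable
  have hp0sm : StronglyMeasurable[MeasurableSpace.comap X inferInstance] fun ω => p0 (X ω) := (hp0m.comp hXm).stronglyMeasurable
  have hcond1 : μ[(fun ω => Y ω - q0 (X ω))|MeasurableSpace.comap X inferInstance] =ᵐ[μ] 0 := by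
    refine (condExp_sub (bddIntegrable hY bY) hq0Xint (MeasurableSpace.comap X inferInstance)).trans ?_
    rw [condExp_of_stronglyMeasurable hm hq0sm hq0Xint]
    filter_upwards [hq0] with ω hω
    simp [Pi.sub_apply, ← hω]
  have hcondh : μ[(fun ω => h0 (Z ω, X ω))|MeasurableSpace.comap X inferInstance] =ᵐ[μ] fun ω => p0 (X ω) := by
    refine (condExp_congr_ae hh0).trans ?_
    exact (condExp_condExp_of_le hle hm2).trans hp0.symm
  have hcond2 : μ[(fun ω => h0 (Z ω, X ω) - p0 (X ω))|MeasurableSpace.comap X inferInstance] =ᵐ[μ] 0 := by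
    refine (condExp_sub hh0int hp0Xint (MeasurableSpace.comap X inferInstance)).trans ?_
    rw [condExp_of_stronglyMeasurable hm hp0sm hp0Xint]
    filter_upwards [hcondh] with ω hω
    simp [Pi.sub_apply, hω]
  have hg1sm : StronglyMeasurable[MeasurableSpace.comap X inferInstance] fun ω => μf (X ω) * ν (X ω) :=
    ((hμfm.comp hXm).mul (hνm.comp hXm)).stronglyMeasurable
  have hg2sm : StronglyMeasurable[MeasurableSpace.comap X inferInstance] fun ω => -2 * (θ0 (X ω) * (μf (X ω) * ν (X ω))) :=
    (((hθ0m.comp hXm).mul ((hμfm.comp hXm).mul (hνm.comp hXm))).const_mul (-2)).stronglyMeasurable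
  have hE1 : ∫ ω, (μf (X ω) * ν (X ω)) * (Y ω - q0 (X ω)) ∂μ = 0 :=
    integral_mul_eq_zero hm hg1sm (bddMulFn bμ bν) hF1int hcond1
  have hE2 : ∫ ω, (-2 * (θ0 (X ω) * (μf (X ω) * ν (X ω)))) * (h0 (Z ω, X ω) - p0 (X ω)) ∂μ = 0 :=
    integral_mul_eq_zero hm hg2sm
      (by
        have : ∃ C, ∀ ω : Ω, |(-2 : ℝ)| ≤ C := ⟨2, fun _ => by norm_num⟩
        exact bddMulFn this (bddMulFn bθ (bddMulFn bμ bν)))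
      hF2int hcond2
  have hI1 : Integrable (fun ω => (μf (X ω) * ν (X ω)) * (Y ω - q0 (X ω))) μ :=
    mulIntegrable ((hμfm.comp hX).mul (hνm.comp hX)) (hY.sub (hq0m.comp hX))
      (bddMulFn bμ bν) (bddSubFn bY bq)
  have hI2 : Integrable
      (fun ω => (-2 * (θ0 (X ω) * (μf (X ω) * ν (X ω)))) * (h0 (Z ω, X ω) - p0 (X ω))) μ :=
    mulIntegrable (((hθ0m.comp hX).mul ((hμfm.comp hX).mul (hνm.comp hX))).const_mul (-2))
      ((hh0m.comp hZX).sub (hp0m.comp hX))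
      (by
        have : ∃ C, ∀ ω : Ω, |(-2 : ℝ)| ≤ C := ⟨2, fun _ => by norm_num⟩
        exact bddMulFn this (bddMulFn bθ (bddMulFn bμ bν)))
      bhp
  have hkey : ∫ ω, (a ω * d ω + b ω * c ω) ∂μ = 0 := by
    rw [show (fun ω => a ω * d ω + b ω * c ω)
        = fun ω => (μf (X ω) * ν (X ω)) * (Y ω - q0 (X ω))
          + (-2 * (θ0 (X ω) * (μf (X ω) * ν (X ω)))) * (h0 (Z ω, X ω) - p0 (X ω))
      from funext fun ω => by simp only [ha_def, hb_def, hc_def, hd_def]; ring]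
    rw [integral_add hI1 hI2, hE1, hE2, add_zero]
  have main := poly_core μ a b c d hma hmb hmc hmd bba bbb bbc bbd hkey
  have hfe : (fun st : ℝ × ℝ => ∫ ω, (Y ω - q0 (X ω)
        - (θ0 (X ω) + st.2 * μf (X ω)) * (h0 (Z ω, X ω) - p0 (X ω) - st.1 * ν (X ω))) ^ 2 ∂μ)
      = fun st : ℝ × ℝ => ∫ ω, (a ω + st.1 * b ω + st.2 * c ω + st.1 * st.2 * d ω) ^ 2 ∂μ := by
    funext st
    refine integral_congr_ae (Filter.Eventually.of_forall fun ω => ?_)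
    simp only [ha_def, hb_def, hc_def, hd_def]
    ring
  constructor
  · rw [hfe]; exact main.1
  · have heq : (fun s : ℝ => deriv (fun t : ℝ => ∫ ω, (Y ω - q0 (X ω)
        - (θ0 (X ω) + t * μf (X ω)) * (h0 (Z ω, X ω) - p0 (X ω) - s * ν (X ω))) ^ 2 ∂μ) 0)
        = fun s : ℝ => deriv (fun t : ℝ =>
          ∫ ω, (a ω + s * b ω + t * c ω + s * t * d ω) ^ 2 ∂μ) 0 := by
      funext s
      congr 1
      funext t
      exact congrFun hfe (s, t)
    rw [heq]
    exact main.2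
end

section
/- (Non-orthogonality of the DMLIV loss with respect to h.) For every bounded measurable function μ of X and every bounded measurable function ν of (Z,X), the map (s, t) ↦ E[(Y − q0(X) − (θ0(X) + t·μ(X))·(h0(Z,X) + s·ν(Z,X) − p0(X)))²] is smooth (a polynomial in (s,t)) and its mixed partial derivative ∂²/∂s∂t evaluated at (0,0) equals 2·E[θ0(X)·μ(X)·(h0(Z,X) − p0(X))·ν(Z,X)]. -/
open MeasureTheory Filter

lemma aux_integrable_of_bdd {Ω : Type*} [MeasurableSpace Ω] {μ : Measure Ω} [IsFiniteMeasure μ]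
    {f : Ω → ℝ} (hf : Measurable f) (h : ∃ C, ∀ ω, |f ω| ≤ C) : Integrable f μ := by
  obtain ⟨C, hC⟩ := h
  exact (integrable_const C).mono' hf.aestronglyMeasurable
    (Eventually.of_forall fun ω => by simpa using hC ω)

lemma aux_bdd_mul {Ω : Type*} {f g : Ω → ℝ} (hf : ∃ C, ∀ ω, |f ω| ≤ C)
    (hg : ∃ C, ∀ ω, |g ω| ≤ C) : ∃ C, ∀ ω, |f ω * g ω| ≤ C := by
  obtain ⟨C, hC⟩ := hf; obtain ⟨D, hD⟩ := hg
  refine ⟨|C| * |D|, fun ω => ?_⟩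
  rw [abs_mul]
  exact mul_le_mul ((hC ω).trans (le_abs_self C)) ((hD ω).trans (le_abs_self D))
    (abs_nonneg _) (abs_nonneg _)

lemma aux_bdd_sub {Ω : Type*} {f g : Ω → ℝ} (hf : ∃ C, ∀ ω, |f ω| ≤ C)
    (hg : ∃ C, ∀ ω, |g ω| ≤ C) : ∃ C, ∀ ω, |f ω - g ω| ≤ C := by
  obtain ⟨C, hC⟩ := hf; obtain ⟨D, hD⟩ := hg
  exact ⟨C + D, fun ω => (abs_sub _ _).trans (add_le_add (hC ω) (hD ω))⟩

lemma aux_deriv_quad (k0 k1 k2 : ℝ) : deriv (fun t : ℝ => k0 + k1 * t + k2 * t ^ 2) 0 = k1 := by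
  have h := (((hasDerivAt_const (0:ℝ) k0).add ((hasDerivAt_id (0:ℝ)).const_mul k1)).add
    ((hasDerivAt_pow 2 (0:ℝ)).const_mul k2)).deriv
  rw [show (fun t : ℝ => k0 + k1 * t + k2 * t ^ 2) = ((fun _ => k0) + fun y => k1 * y) + fun y => k2 * y ^ 2 from rfl]
  simpa using h

lemma aux_expand {Ω : Type*} [MeasurableSpace Ω] (μ : Measure Ω) [IsFiniteMeasure μ]
    (a b c d : Ω → ℝ) (ham : Measurable a) (hbm : Measurable b) (hcm : Measurable c)
    (hdm : Measurable d) (haB : ∃ C, ∀ ω, |a ω| ≤ C) (hbB : ∃ C, ∀ ω, |b ω| ≤ C)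
    (hcB : ∃ C, ∀ ω, |c ω| ≤ C) (hdB : ∃ C, ∀ ω, |d ω| ≤ C) (s t : ℝ) :
    ∫ ω, (a ω - s * b ω - t * c ω - s * t * d ω) ^ 2 ∂μ =
      ((∫ ω, a ω * a ω ∂μ) + (-2 * ∫ ω, a ω * b ω ∂μ) * s + (∫ ω, b ω * b ω ∂μ) * s ^ 2)
      + ((-2 * ∫ ω, a ω * c ω ∂μ) + (2 * (∫ ω, b ω * c ω ∂μ) - 2 * ∫ ω, a ω * d ω ∂μ) * s
          + (2 * ∫ ω, b ω * d ω ∂μ) * s ^ 2) * t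
      + ((∫ ω, c ω * c ω ∂μ) + (2 * ∫ ω, c ω * d ω ∂μ) * s + (∫ ω, d ω * d ω ∂μ) * s ^ 2)
          * t ^ 2 := by
  have I : ∀ (f g : Ω → ℝ), Measurable f → Measurable g → (∃ C, ∀ ω, |f ω| ≤ C) →
      (∃ C, ∀ ω, |g ω| ≤ C) → Integrable (fun ω => f ω * g ω) μ := fun f g hf hg hfB hgB =>
    aux_integrable_of_bdd (hf.mul hg) (aux_bdd_mul hfB hgB)
  have Iaa := I a a ham ham haB haB
  have Iab := I a b ham hbm haB hbB
  have Iac := I a c ham hcm haB hcB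
  have Iad := I a d ham hdm haB hdB
  have Ibb := I b b hbm hbm hbB hbB
  have Ibc := I b c hbm hcm hbB hcB
  have Ibd := I b d hbm hdm hbB hdB
  have Icc := I c c hcm hcm hcB hcB
  have Icd := I c d hcm hdm hcB hdB
  have Idd := I d d hdm hdm hdB hdB
  have hpt : (fun ω => (a ω - s * b ω - t * c ω - s * t * d ω) ^ 2) =
      fun ω => ((((((((a ω * a ω + (-2 * s) * (a ω * b ω)) + (-2 * t) * (a ω * c ω))
        + (s ^ 2) * (b ω * b ω)) + (t ^ 2) * (c ω * c ω)) + (2 * s * t) * (b ω * c ω))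
        + (-2 * (s * t)) * (a ω * d ω)) + (2 * (s ^ 2 * t)) * (b ω * d ω))
        + (2 * (s * t ^ 2)) * (c ω * d ω)) + (s ^ 2 * t ^ 2) * (d ω * d ω) :=
    funext fun ω => by ring
  have S1 : Integrable (fun ω => a ω * a ω + (-2 * s) * (a ω * b ω)) μ :=
    Iaa.add (Iab.const_mul _)
  have S2 : Integrable (fun ω => (a ω * a ω + (-2 * s) * (a ω * b ω))
      + (-2 * t) * (a ω * c ω)) μ := S1.add (Iac.const_mul _)
  have S3 : Integrable (fun ω => ((a ω * a ω + (-2 * s) * (a ω * b ω))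
      + (-2 * t) * (a ω * c ω)) + (s ^ 2) * (b ω * b ω)) μ := S2.add (Ibb.const_mul _)
  have S4 : Integrable (fun ω => (((a ω * a ω + (-2 * s) * (a ω * b ω))
      + (-2 * t) * (a ω * c ω)) + (s ^ 2) * (b ω * b ω)) + (t ^ 2) * (c ω * c ω)) μ :=
    S3.add (Icc.const_mul _)
  have S5 : Integrable (fun ω => ((((a ω * a ω + (-2 * s) * (a ω * b ω))
      + (-2 * t) * (a ω * c ω)) + (s ^ 2) * (b ω * b ω)) + (t ^ 2) * (c ω * c ω))
      + (2 * s * t) * (b ω * c ω)) μ := S4.add (Ibc.const_mul _)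
  have S6 : Integrable (fun ω => (((((a ω * a ω + (-2 * s) * (a ω * b ω))
      + (-2 * t) * (a ω * c ω)) + (s ^ 2) * (b ω * b ω)) + (t ^ 2) * (c ω * c ω))
      + (2 * s * t) * (b ω * c ω)) + (-2 * (s * t)) * (a ω * d ω)) μ :=
    S5.add (Iad.const_mul _)
  have S7 : Integrable (fun ω => ((((((a ω * a ω + (-2 * s) * (a ω * b ω))
      + (-2 * t) * (a ω * c ω)) + (s ^ 2) * (b ω * b ω)) + (t ^ 2) * (c ω * c ω))
      + (2 * s * t) * (b ω * c ω)) + (-2 * (s * t)) * (a ω * d ω))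
      + (2 * (s ^ 2 * t)) * (b ω * d ω)) μ := S6.add (Ibd.const_mul _)
  have S8 : Integrable (fun ω => (((((((a ω * a ω + (-2 * s) * (a ω * b ω))
      + (-2 * t) * (a ω * c ω)) + (s ^ 2) * (b ω * b ω)) + (t ^ 2) * (c ω * c ω))
      + (2 * s * t) * (b ω * c ω)) + (-2 * (s * t)) * (a ω * d ω))
      + (2 * (s ^ 2 * t)) * (b ω * d ω)) + (2 * (s * t ^ 2)) * (c ω * d ω)) μ :=
    S7.add (Icd.const_mul _)
  rw [hpt, integral_add S8 (Idd.const_mul _), integral_add S7 (Icd.const_mul _),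
    integral_add S6 (Ibd.const_mul _), integral_add S5 (Iad.const_mul _),
    integral_add S4 (Ibc.const_mul _), integral_add S3 (Icc.const_mul _),
    integral_add S2 (Ibb.const_mul _), integral_add S1 (Iac.const_mul _),
    integral_add Iaa (Iab.const_mul _)]
  simp only [integral_const_mul]
  ring


lemma aux_key {Ω : Type*} [m0 : MeasurableSpace Ω] (μ : Measure Ω) [IsProbabilityMeasure μ]
    {m mX : MeasurableSpace Ω} (hmle : m ≤ m0) (hmXle : mX ≤ m0) (hmXm : mX ≤ m)
    (YY TT θX f0X q0X p0X h0P DD : Ω → ℝ)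
    (iYY : Integrable YY μ) (iTT : Integrable TT μ)
    (iθT : Integrable (fun ω => θX ω * TT ω) μ) (if0 : Integrable f0X μ)
    (iW : Integrable (fun ω => f0X ω - q0X ω - θX ω * (h0P ω - p0X ω)) μ)
    (iA : Integrable (fun ω => YY ω - q0X ω - θX ω * (h0P ω - p0X ω)) μ)
    (iDA : Integrable (fun ω => DD ω * (YY ω - q0X ω - θX ω * (h0P ω - p0X ω))) μ)
    (hθXm : StronglyMeasurable[m] θX) (hθXmX : StronglyMeasurable[mX] θX)
    (hf0XmX : StronglyMeasurable[mX] f0X)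
    (hWm : StronglyMeasurable[m] (fun ω => f0X ω - q0X ω - θX ω * (h0P ω - p0X ω)))
    (hDDm : StronglyMeasurable[m] DD)
    (hIV : μ[(fun ω => YY ω - θX ω * TT ω - f0X ω) | m] =ᵐ[μ] 0)
    (hq0 : q0X =ᵐ[μ] μ[YY | mX]) (hp0 : p0X =ᵐ[μ] μ[TT | mX])
    (hh0 : h0P =ᵐ[μ] μ[TT | m]) :
    ∫ ω, (YY ω - q0X ω - θX ω * (h0P ω - p0X ω)) * DD ω ∂μ = 0 := by
  haveI : SigmaFinite (μ.trim hmle) := inferInstance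
  haveI : SigmaFinite (μ.trim hmXle) := inferInstance
  have hIVX : μ[(fun ω => YY ω - θX ω * TT ω - f0X ω) | mX] =ᵐ[μ] 0 := by
    calc μ[(fun ω => YY ω - θX ω * TT ω - f0X ω) | mX]
        =ᵐ[μ] μ[μ[(fun ω => YY ω - θX ω * TT ω - f0X ω) | m] | mX] :=
          (condExp_condExp_of_le hmXm hmle).symm
      _ =ᵐ[μ] μ[(0 : Ω → ℝ) | mX] := condExp_congr_ae hIV
      _ =ᵐ[μ] 0 := by rw [condExp_zero]
  have hsplit : μ[(fun ω => YY ω - θX ω * TT ω - f0X ω) | mX] =ᵐ[μ]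
      fun ω => q0X ω - θX ω * p0X ω - f0X ω := by
    have h1 : μ[(fun ω => YY ω - θX ω * TT ω - f0X ω) | mX] =ᵐ[μ]
        μ[(fun ω => YY ω - θX ω * TT ω) | mX] - μ[f0X | mX] := by
      rw [show (fun ω => YY ω - θX ω * TT ω - f0X ω)
          = (fun ω => YY ω - θX ω * TT ω) - f0X from rfl]
      exact condExp_sub (by exact iYY.sub iθT) if0 _
    have h2 : μ[(fun ω => YY ω - θX ω * TT ω) | mX] =ᵐ[μ]
        μ[YY | mX] - μ[(fun ω => θX ω * TT ω) | mX] := by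
      rw [show (fun ω => YY ω - θX ω * TT ω) = YY - (fun ω => θX ω * TT ω) from rfl]
      exact condExp_sub iYY iθT _
    have h3 : μ[(fun ω => θX ω * TT ω) | mX] =ᵐ[μ] θX * μ[TT | mX] :=
      condExp_mul_of_stronglyMeasurable_left (m := mX) hθXmX (by exact iθT) iTT
    have h4 : μ[f0X | mX] = f0X :=
      condExp_of_stronglyMeasurable hmXle hf0XmX if0
    filter_upwards [h1, h2, h3, hq0, hp0] with ω e1 e2 e3 eq0 ep0
    have e4 := congrFun h4 ω
    simp only [Pi.sub_apply] at e1 e2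
    simp only [Pi.mul_apply] at e3
    rw [e1, e2, e3, e4, ← eq0, ← ep0]
  have hkey : ∀ᵐ ω ∂μ, q0X ω - θX ω * p0X ω - f0X ω = 0 := by
    filter_upwards [hsplit, hIVX] with ω h1 h2
    have := h1.symm.trans h2
    simpa using this
  have hcondA : μ[(fun ω => YY ω - q0X ω - θX ω * (h0P ω - p0X ω)) | m] =ᵐ[μ] 0 := by
    have hdecomp : (fun ω => YY ω - q0X ω - θX ω * (h0P ω - p0X ω))
        = (fun ω => YY ω - θX ω * TT ω - f0X ω)
          + ((fun ω => θX ω * TT ω)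
            + (fun ω => f0X ω - q0X ω - θX ω * (h0P ω - p0X ω))) := by
      funext ω
      simp only [Pi.add_apply]
      ring
    have h1 : μ[(fun ω => YY ω - q0X ω - θX ω * (h0P ω - p0X ω)) | m] =ᵐ[μ]
        μ[(fun ω => YY ω - θX ω * TT ω - f0X ω) | m]
        + μ[((fun ω => θX ω * TT ω)
            + (fun ω => f0X ω - q0X ω - θX ω * (h0P ω - p0X ω))) | m] := by
      rw [hdecomp]
      exact condExp_add (by exact (iYY.sub iθT).sub if0) (by exact iθT.add iW) _
    have h2 : μ[((fun ω => θX ω * TT ω)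
          + (fun ω => f0X ω - q0X ω - θX ω * (h0P ω - p0X ω))) | m] =ᵐ[μ]
        μ[(fun ω => θX ω * TT ω) | m]
        + μ[(fun ω => f0X ω - q0X ω - θX ω * (h0P ω - p0X ω)) | m] :=
      condExp_add (by exact iθT) iW _
    have h3 : μ[(fun ω => θX ω * TT ω) | m] =ᵐ[μ] θX * μ[TT | m] :=
      condExp_mul_of_stronglyMeasurable_left (m := m) hθXm (by exact iθT) iTT
    have h4 : μ[(fun ω => f0X ω - q0X ω - θX ω * (h0P ω - p0X ω)) | m]
        = fun ω => f0X ω - q0X ω - θX ω * (h0P ω - p0X ω) :=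
      condExp_of_stronglyMeasurable hmle hWm iW
    filter_upwards [h1, h2, h3, hIV, hh0, hkey] with ω e1 e2 e3 eIV eh0 ek
    have e4 := congrFun h4 ω
    simp only [Pi.add_apply] at e1 e2
    simp only [Pi.mul_apply] at e3
    simp only [Pi.zero_apply] at eIV ⊢
    rw [e1, e2, e3, e4, eIV, eh0]
    linarith [ek]
  have hDA : (∫ ω, (YY ω - q0X ω - θX ω * (h0P ω - p0X ω)) * DD ω ∂μ)
      = ∫ ω, DD ω * (YY ω - q0X ω - θX ω * (h0P ω - p0X ω)) ∂μ :=
    integral_congr_ae (Eventually.of_forall fun ω => mul_comm _ _)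
  have hpull : μ[(fun ω => DD ω * (YY ω - q0X ω - θX ω * (h0P ω - p0X ω))) | m] =ᵐ[μ]
      DD * μ[(fun ω => YY ω - q0X ω - θX ω * (h0P ω - p0X ω)) | m] :=
    condExp_mul_of_stronglyMeasurable_left (m := m) hDDm (by exact iDA) iA
  have hzero : μ[(fun ω => DD ω * (YY ω - q0X ω - θX ω * (h0P ω - p0X ω))) | m] =ᵐ[μ] 0 := by
    filter_upwards [hpull, hcondA] with ω e1 e2
    simp only [Pi.mul_apply] at e1
    simp only [Pi.zero_apply] at e2 ⊢
    rw [e1, e2, mul_zero]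
  have h5 : (∫ ω, DD ω * (YY ω - q0X ω - θX ω * (h0P ω - p0X ω)) ∂μ)
      = ∫ ω, (μ[(fun ω => DD ω * (YY ω - q0X ω - θX ω * (h0P ω - p0X ω))) | m]) ω ∂μ :=
    (integral_condExp hmle (f := fun ω => DD ω * (YY ω - q0X ω - θX ω * (h0P ω - p0X ω)))).symm
  rw [hDA, h5, integral_eq_zero_of_ae hzero]

theorem stmt_7
    {Ω 𝓧 : Type*} [MeasurableSpace Ω] [MeasurableSpace 𝓧] [StandardBorelSpace 𝓧]
    (μ : Measure Ω) [IsProbabilityMeasure μ]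
    (Y T Z : Ω → ℝ) (X : Ω → 𝓧)
    (hY : Measurable Y) (hT : Measurable T) (hZ : Measurable Z) (hX : Measurable X)
    (hYbdd : ∃ C, ∀ ω, |Y ω| ≤ C) (hTbdd : ∃ C, ∀ ω, |T ω| ≤ C)
    (hZbdd : ∃ C, ∀ ω, |Z ω| ≤ C)
    (θ0 f0 : 𝓧 → ℝ) (hθ0m : Measurable θ0) (hf0m : Measurable f0)
    (hθ0bdd : ∃ C, ∀ x, |θ0 x| ≤ C) (hf0bdd : ∃ C, ∀ x, |f0 x| ≤ C)
    (hIV : μ[fun ω => Y ω - θ0 (X ω) * T ω - f0 (X ω) |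
        MeasurableSpace.comap (fun ω => (Z ω, X ω)) inferInstance] =ᵐ[μ] 0)
    (q0 p0 r0 : 𝓧 → ℝ) (hq0m : Measurable q0) (hp0m : Measurable p0) (hr0m : Measurable r0)
    (hq0bdd : ∃ C, ∀ x, |q0 x| ≤ C) (hp0bdd : ∃ C, ∀ x, |p0 x| ≤ C)
    (hr0bdd : ∃ C, ∀ x, |r0 x| ≤ C)
    (hq0 : (fun ω => q0 (X ω)) =ᵐ[μ] μ[Y | MeasurableSpace.comap X inferInstance])
    (hp0 : (fun ω => p0 (X ω)) =ᵐ[μ] μ[T | MeasurableSpace.comap X inferInstance])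
    (hr0 : (fun ω => r0 (X ω)) =ᵐ[μ] μ[Z | MeasurableSpace.comap X inferInstance])
    (h0 : ℝ × 𝓧 → ℝ) (hh0m : Measurable h0) (hh0bdd : ∃ C, ∀ zx, |h0 zx| ≤ C)
    (hh0 : (fun ω => h0 (Z ω, X ω)) =ᵐ[μ]
        μ[T | MeasurableSpace.comap (fun ω => (Z ω, X ω)) inferInstance])
    (β0 : 𝓧 → ℝ) (hβ0m : Measurable β0) (hβ0bdd : ∃ C, ∀ x, |β0 x| ≤ C)
    (hβ0 : (fun ω => β0 (X ω)) =ᵐ[μ]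
        μ[fun ω => (T ω - p0 (X ω)) * (Z ω - r0 (X ω)) | MeasurableSpace.comap X inferInstance])
    (V0 : 𝓧 → ℝ) (hV0m : Measurable V0) (hV0bdd : ∃ C, ∀ x, |V0 x| ≤ C)
    (hV0 : (fun ω => V0 (X ω)) =ᵐ[μ]
        μ[fun ω => (h0 (Z ω, X ω) - p0 (X ω)) ^ 2 | MeasurableSpace.comap X inferInstance])
    (μf : 𝓧 → ℝ) (hμfm : Measurable μf) (hμfbdd : ∃ C, ∀ x, |μf x| ≤ C)
    (ν : ℝ × 𝓧 → ℝ) (hνm : Measurable ν) (hνbdd : ∃ C, ∀ zx, |ν zx| ≤ C) :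
    ContDiff ℝ (⊤ : ℕ∞) (fun st : ℝ × ℝ => ∫ ω, (Y ω - q0 (X ω)
        - (θ0 (X ω) + st.2 * μf (X ω)) * (h0 (Z ω, X ω) + st.1 * ν (Z ω, X ω) - p0 (X ω))) ^ 2 ∂μ)
    ∧ deriv (fun s : ℝ => deriv (fun t : ℝ => ∫ ω, (Y ω - q0 (X ω)
        - (θ0 (X ω) + t * μf (X ω)) * (h0 (Z ω, X ω) + s * ν (Z ω, X ω) - p0 (X ω))) ^ 2 ∂μ) 0) 0
        = 2 * ∫ ω, θ0 (X ω) * μf (X ω) * (h0 (Z ω, X ω) - p0 (X ω)) * ν (Z ω, X ω) ∂μ := by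
  have hpair : Measurable fun ω => (Z ω, X ω) := hZ.prodMk hX
  have hmle : MeasurableSpace.comap (fun ω => (Z ω, X ω)) inferInstance
      ≤ ‹MeasurableSpace Ω› := hpair.comap_le
  have hmXle : MeasurableSpace.comap X inferInstance ≤ ‹MeasurableSpace Ω› := hX.comap_le
  have hpairm : Measurable[MeasurableSpace.comap (fun ω => (Z ω, X ω)) inferInstance]
      fun ω => (Z ω, X ω) := Measurable.of_comap_le le_rfl
  have hXmm : Measurable[MeasurableSpace.comap (fun ω => (Z ω, X ω)) inferInstance] X := by
    exact measurable_snd.comp hpairm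
  have hXmX : Measurable[MeasurableSpace.comap X inferInstance] X :=
    Measurable.of_comap_le le_rfl
  have hmXm : MeasurableSpace.comap X inferInstance
      ≤ MeasurableSpace.comap (fun ω => (Z ω, X ω)) inferInstance := hXmm.comap_le
  -- bounds composed with X / (Z,X)
  have bq0X : ∃ C, ∀ ω, |q0 (X ω)| ≤ C := hq0bdd.imp fun C h ω => h (X ω)
  have bp0X : ∃ C, ∀ ω, |p0 (X ω)| ≤ C := hp0bdd.imp fun C h ω => h (X ω)
  have bθ0X : ∃ C, ∀ ω, |θ0 (X ω)| ≤ C := hθ0bdd.imp fun C h ω => h (X ω)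
  have bf0X : ∃ C, ∀ ω, |f0 (X ω)| ≤ C := hf0bdd.imp fun C h ω => h (X ω)
  have bμfX : ∃ C, ∀ ω, |μf (X ω)| ≤ C := hμfbdd.imp fun C h ω => h (X ω)
  have bh0P : ∃ C, ∀ ω, |h0 (Z ω, X ω)| ≤ C := hh0bdd.imp fun C h ω => h (Z ω, X ω)
  have bνP : ∃ C, ∀ ω, |ν (Z ω, X ω)| ≤ C := hνbdd.imp fun C h ω => h (Z ω, X ω)
  -- the four coefficient functions
  set A : Ω → ℝ := fun ω => Y ω - q0 (X ω) - θ0 (X ω) * (h0 (Z ω, X ω) - p0 (X ω)) with hA_def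
  set B : Ω → ℝ := fun ω => θ0 (X ω) * ν (Z ω, X ω) with hB_def
  set Cf : Ω → ℝ := fun ω => μf (X ω) * (h0 (Z ω, X ω) - p0 (X ω)) with hC_def
  set D : Ω → ℝ := fun ω => μf (X ω) * ν (Z ω, X ω) with hD_def
  have hAm : Measurable A :=
    (hY.sub (hq0m.comp hX)).sub ((hθ0m.comp hX).mul ((hh0m.comp hpair).sub (hp0m.comp hX)))
  have hBm : Measurable B := (hθ0m.comp hX).mul (hνm.comp hpair)
  have hCm : Measurable Cf := (hμfm.comp hX).mul ((hh0m.comp hpair).sub (hp0m.comp hX))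
  have hDm : Measurable D := (hμfm.comp hX).mul (hνm.comp hpair)
  have hAB : ∃ C, ∀ ω, |A ω| ≤ C :=
    aux_bdd_sub (aux_bdd_sub hYbdd bq0X) (aux_bdd_mul bθ0X (aux_bdd_sub bh0P bp0X))
  have hBB : ∃ C, ∀ ω, |B ω| ≤ C := aux_bdd_mul bθ0X bνP
  have hCB : ∃ C, ∀ ω, |Cf ω| ≤ C := aux_bdd_mul bμfX (aux_bdd_sub bh0P bp0X)
  have hDB : ∃ C, ∀ ω, |D ω| ≤ C := aux_bdd_mul bμfX bνP
  -- polynomial expansion of the loss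
  have hF : ∀ s t : ℝ, (∫ ω, (Y ω - q0 (X ω)
      - (θ0 (X ω) + t * μf (X ω)) * (h0 (Z ω, X ω) + s * ν (Z ω, X ω) - p0 (X ω))) ^ 2 ∂μ)
      = ((∫ ω, A ω * A ω ∂μ) + (-2 * ∫ ω, A ω * B ω ∂μ) * s + (∫ ω, B ω * B ω ∂μ) * s ^ 2)
      + ((-2 * ∫ ω, A ω * Cf ω ∂μ) + (2 * (∫ ω, B ω * Cf ω ∂μ) - 2 * ∫ ω, A ω * D ω ∂μ) * s
          + (2 * ∫ ω, B ω * D ω ∂μ) * s ^ 2) * t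
      + ((∫ ω, Cf ω * Cf ω ∂μ) + (2 * ∫ ω, Cf ω * D ω ∂μ) * s
          + (∫ ω, D ω * D ω ∂μ) * s ^ 2) * t ^ 2 := by
    intro s t
    rw [show (fun ω => (Y ω - q0 (X ω)
        - (θ0 (X ω) + t * μf (X ω)) * (h0 (Z ω, X ω) + s * ν (Z ω, X ω) - p0 (X ω))) ^ 2)
        = fun ω => (A ω - s * B ω - t * Cf ω - s * t * D ω) ^ 2 from funext fun ω => by
      simp only [hA_def, hB_def, hC_def, hD_def]; ring]
    exact aux_expand μ A B Cf D hAm hBm hCm hDm hAB hBB hCB hDB s t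
  -- integrability
  have iT : Integrable T μ := aux_integrable_of_bdd hT hTbdd
  have iY : Integrable Y μ := aux_integrable_of_bdd hY hYbdd
  have iθT : Integrable (fun ω => θ0 (X ω) * T ω) μ :=
    aux_integrable_of_bdd ((hθ0m.comp hX).mul hT) (aux_bdd_mul bθ0X hTbdd)
  have if0 : Integrable (fun ω => f0 (X ω)) μ := aux_integrable_of_bdd (hf0m.comp hX) bf0X
  have iA : Integrable A μ := aux_integrable_of_bdd hAm hAB
  have iW : Integrable (fun ω => f0 (X ω) - q0 (X ω)
      - θ0 (X ω) * (h0 (Z ω, X ω) - p0 (X ω))) μ := aux_integrable_of_bdd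
    (((hf0m.comp hX).sub (hq0m.comp hX)).sub
      ((hθ0m.comp hX).mul ((hh0m.comp hpair).sub (hp0m.comp hX))))
    (aux_bdd_sub (aux_bdd_sub bf0X bq0X) (aux_bdd_mul bθ0X (aux_bdd_sub bh0P bp0X)))
  have iDA : Integrable (fun ω => D ω * A ω) μ :=
    aux_integrable_of_bdd (hDm.mul hAm) (aux_bdd_mul hDB hAB)
  -- strongly measurable wrt sub-σ-algebras
  have hθ0sm : StronglyMeasurable[MeasurableSpace.comap (fun ω => (Z ω, X ω)) inferInstance]
      (fun ω => θ0 (X ω)) := (hθ0m.comp hXmm).stronglyMeasurable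
  have hθ0smX : StronglyMeasurable[MeasurableSpace.comap X inferInstance]
      (fun ω => θ0 (X ω)) := (hθ0m.comp hXmX).stronglyMeasurable
  have hf0smX : StronglyMeasurable[MeasurableSpace.comap X inferInstance]
      (fun ω => f0 (X ω)) := (hf0m.comp hXmX).stronglyMeasurable
  have hWsm : StronglyMeasurable[MeasurableSpace.comap (fun ω => (Z ω, X ω)) inferInstance]
      (fun ω => f0 (X ω) - q0 (X ω) - θ0 (X ω) * (h0 (Z ω, X ω) - p0 (X ω))) :=
    Measurable.stronglyMeasurable (((hf0m.comp hXmm).sub (hq0m.comp hXmm)).sub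
      ((hθ0m.comp hXmm).mul ((hh0m.comp hpairm).sub (hp0m.comp hXmm))))
  have hDsm : StronglyMeasurable[MeasurableSpace.comap (fun ω => (Z ω, X ω)) inferInstance]
      D := Measurable.stronglyMeasurable ((hμfm.comp hXmm).mul (hνm.comp hpairm))
  -- the cross term vanishes
  have hAD0 : (∫ ω, A ω * D ω ∂μ) = 0 := by
    have h := aux_key μ hmle hmXle hmXm Y T (fun ω => θ0 (X ω)) (fun ω => f0 (X ω))
      (fun ω => q0 (X ω)) (fun ω => p0 (X ω)) (fun ω => h0 (Z ω, X ω))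
      (fun ω => μf (X ω) * ν (Z ω, X ω))
      iY iT iθT if0 (by exact iW) (by exact iA) (by exact iDA)
      hθ0sm hθ0smX hf0smX (by exact hWsm) (by exact hDsm)
      hIV hq0 hp0 hh0
    rw [hA_def, hD_def]
    simpa using h
  -- finish
  constructor
  · rw [show (fun st : ℝ × ℝ => ∫ ω, (Y ω - q0 (X ω)
        - (θ0 (X ω) + st.2 * μf (X ω)) * (h0 (Z ω, X ω) + st.1 * ν (Z ω, X ω) - p0 (X ω))) ^ 2 ∂μ)
        = fun st : ℝ × ℝ =>
        ((∫ ω, A ω * A ω ∂μ) + (-2 * ∫ ω, A ω * B ω ∂μ) * st.1 + (∫ ω, B ω * B ω ∂μ) * st.1 ^ 2)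
        + ((-2 * ∫ ω, A ω * Cf ω ∂μ)
            + (2 * (∫ ω, B ω * Cf ω ∂μ) - 2 * ∫ ω, A ω * D ω ∂μ) * st.1
            + (2 * ∫ ω, B ω * D ω ∂μ) * st.1 ^ 2) * st.2
        + ((∫ ω, Cf ω * Cf ω ∂μ) + (2 * ∫ ω, Cf ω * D ω ∂μ) * st.1
            + (∫ ω, D ω * D ω ∂μ) * st.1 ^ 2) * st.2 ^ 2
        from funext fun st => hF st.1 st.2]
    fun_prop
  · have hinner : ∀ s : ℝ, deriv (fun t : ℝ => ∫ ω, (Y ω - q0 (X ω)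
        - (θ0 (X ω) + t * μf (X ω)) * (h0 (Z ω, X ω) + s * ν (Z ω, X ω) - p0 (X ω))) ^ 2 ∂μ) 0
        = (-2 * ∫ ω, A ω * Cf ω ∂μ)
          + (2 * (∫ ω, B ω * Cf ω ∂μ) - 2 * ∫ ω, A ω * D ω ∂μ) * s
          + (2 * ∫ ω, B ω * D ω ∂μ) * s ^ 2 := by
      intro s
      rw [funext fun t : ℝ => hF s t]
      exact aux_deriv_quad _ _ _
    rw [funext hinner, aux_deriv_quad, hAD0]
    have hBC : (∫ ω, B ω * Cf ω ∂μ)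
        = ∫ ω, θ0 (X ω) * μf (X ω) * (h0 (Z ω, X ω) - p0 (X ω)) * ν (Z ω, X ω) ∂μ :=
      integral_congr_ae (Eventually.of_forall fun ω => by
        simp only [hB_def, hC_def]; ring)
    rw [hBC]
    ring
end
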